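/- arXiv:2206.12228 — 8 statements merged into one kernel-verified Lean document; each statement's English description precedes it below -/
import Mathlib

section
/- Let D be an (ε,K)-boundary-invariant subset of finite measure of a locally compact second countable group G with right Haar measure, and let A ⊆ D be measurable. Then there exists x ∈ G with xK ⊆ D and |xK ∩ A| ≤ (|A| / ((1−ε)|D|)) · |xK|. -/
open MeasureTheory Set
open scoped ENNReal Pointwise

/-- The `K`-boundary of `E`: the union of all left translates `g • K` that
intersect both `E` and its complement. -/
def kBoundary {G : Type*} [Group G] (K E : Set G) : Set G :=
  ⋃ g ∈ {g : G | ((g • K) ∩ E).Nonempty ∧ ((g • K) ∩ Eᶜ).Nonempty}, g • K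

/-- If `D` is `(ε,K)`-boundary-invariant and `A ⊆ D`, then there exists `x` with
`xK ⊆ D` and `|xK ∩ A| ≤ (|A| / ((1-ε)|D|)) |xK|`. -/
theorem stmt2 {G : Type*} [Group G] [TopologicalSpace G] [IsTopologicalGroup G]
    [LocallyCompactSpace G] [SecondCountableTopology G]
    [MeasurableSpace G] [BorelSpace G]
    (μ : Measure G) [μ.IsMulRightInvariant] [IsFiniteMeasureOnCompacts μ]
    (K D A : Set G) (hK : IsCompact K) (hKne : K.Nonempty) (hK0 : μ K ≠ 0)
    (hDm : MeasurableSet D) (hD0 : μ D ≠ 0) (hDfin : μ D ≠ ⊤)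
    (hAm : MeasurableSet A) (hAD : A ⊆ D)
    (ε : ℝ≥0∞) (hε : ε < 1)
    (hinv : μ (kBoundary K D) ≤ ε * μ D) :
    ∃ x : G, x • K ⊆ D ∧ μ (x • K ∩ A) ≤ μ A / ((1 - ε) * μ D) * μ (x • K) := by
  classical
  set ν : Measure G := μ.inv with hν
  set B : Set G := toMeasurable μ (kBoundary K D) with hB
  set E : Set G := D \ B with hEdef
  have hEm : MeasurableSet E := hDm.diff (measurableSet_toMeasurable μ _)
  set d : ℝ≥0∞ := (1 - ε) * μ D with hd
  have h1ε : (1 : ℝ≥0∞) - ε ≠ 0 := by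
    simpa [tsub_eq_zero_iff_le] using not_le.mpr hε
  have hd0 : d ≠ 0 := by
    exact mul_ne_zero h1ε hD0
  have hdfin : d ≠ ⊤ := ENNReal.mul_ne_top (by simp) hDfin
  -- μ E ≥ d
  have hdE : d ≤ μ E := by
    have h1 : μ D ≤ μ (D ∩ B) + μ (D \ B) := measure_le_inter_add_diff μ D B
    have h2 : μ (D ∩ B) ≤ ε * μ D := by
      refine le_trans (measure_mono inter_subset_right) ?_
      rw [hB, measure_toMeasurable]; exact hinv
    have h3 : μ D ≤ μ E + ε * μ D := by
      calc μ D ≤ μ (D ∩ B) + μ (D \ B) := h1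
        _ ≤ ε * μ D + μ E := add_le_add h2 le_rfl
        _ = μ E + ε * μ D := add_comm _ _
    have : (1 - ε) * μ D = 1 * μ D - ε * μ D :=
      ENNReal.sub_mul (fun _ _ => hDfin)
    rw [hd, this, one_mul]
    exact tsub_le_iff_right.mpr h3
  have hE0 : μ E ≠ 0 := fun h => hd0 (le_antisymm (h ▸ hdE) (zero_le))
  -- geometric claim
  have hgeo : ∀ x : G, (x • K ∩ E).Nonempty → x • K ⊆ D := by
    rintro x ⟨y, hyK, hyE⟩ z hz
    by_contra hzD
    have hxmem : x ∈ {g : G | ((g • K) ∩ D).Nonempty ∧ ((g • K) ∩ Dᶜ).Nonempty} :=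
      ⟨⟨y, hyK, hyE.1⟩, ⟨z, hz, hzD⟩⟩
    have hb : x • K ⊆ kBoundary K D := fun w hw => mem_biUnion hxmem hw
    exact hyE.2 (subset_toMeasurable μ _ (hb hyK))
  -- closure of K
  set K' : Set G := closure K with hK'
  have hK'c : IsCompact K' := hK.closure
  have hK'm : MeasurableSet K' := isClosed_closure.measurableSet
  have hKsub : K ⊆ K' := subset_closure
  have hxKK' : ∀ x : G, μ (x • K') = μ (x • K) := by
    intro x
    rw [hK', ← closure_smul]
    exact (hK.smul x).measure_closure μ
  have hxKfin : ∀ x : G, μ (x • K') ≠ ⊤ := fun x => ((hK'c.smul x).measure_lt_top).ne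
  have hinterEq : ∀ (x : G) (S : Set G), MeasurableSet S →
      μ (x • K' ∩ S) = μ (x • K ∩ S) := by
    intro x S hS
    have e1 := measure_inter_add_diff (μ := μ) (x • K') hS
    have e2 := measure_inter_add_diff (μ := μ) (x • K) hS
    refine le_antisymm ?_ (measure_mono (inter_subset_inter_left _ (smul_set_mono hKsub)))
    have hdiff : μ (x • K \ S) ≤ μ (x • K' \ S) :=
      measure_mono (diff_subset_diff_left (smul_set_mono hKsub))
    have hfin : μ (x • K' \ S) ≠ ⊤ :=
      (lt_of_le_of_lt (measure_mono diff_subset) (hK'c.smul x).measure_lt_top).ne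
    have : μ (x • K' ∩ S) + μ (x • K' \ S) ≤ μ (x • K ∩ S) + μ (x • K' \ S) := by
      calc μ (x • K' ∩ S) + μ (x • K' \ S) = μ (x • K') := e1
        _ = μ (x • K) := hxKK' x
        _ = μ (x • K ∩ S) + μ (x • K \ S) := e2.symm
        _ ≤ μ (x • K ∩ S) + μ (x • K' \ S) := add_le_add le_rfl hdiff
    exact (ENNReal.add_le_add_iff_right hfin).mp this
  -- Fubini
  have key : ∀ S : Set G, MeasurableSet S →
      (∫⁻ x, μ (x • K' ∩ S) ∂ν) = μ K' * μ S ∧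
        Measurable (fun x : G => μ (x • K' ∩ S)) := by
    intro S hS
    set s : Set (G × G) := {p : G × G | p.1⁻¹ * p.2 ∈ K' ∧ p.2 ∈ S} with hs_def
    have hs : MeasurableSet s :=
      (hK'm.preimage (measurable_fst.inv.mul measurable_snd)).inter
        (hS.preimage measurable_snd)
    have hpre : ∀ x : G, Prod.mk x ⁻¹' s = x • K' ∩ S := by
      intro x; ext y
      simp [hs_def, Set.mem_smul_set_iff_inv_smul_mem, smul_eq_mul]
    have hmeas : Measurable (fun x : G => μ (x • K' ∩ S)) := by
      have := measurable_measure_prodMk_left (ν := μ) hs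
      simpa only [hpre] using this
    refine ⟨?_, hmeas⟩
    have h1 : (∫⁻ x, μ (x • K' ∩ S) ∂ν) = (ν.prod μ) s := by
      rw [Measure.prod_apply hs]
      simp only [hpre]
    have h2 : (ν.prod μ) s = ∫⁻ y, ν ((fun x => (x, y)) ⁻¹' s) ∂μ :=
      Measure.prod_apply_symm hs
    have h3 : ∀ y : G, ν ((fun x => (x, y)) ⁻¹' s) =
        S.indicator (fun _ => μ K') y := by
      intro y
      by_cases hy : y ∈ S
      · have hset : (fun x => (x, y)) ⁻¹' s = (fun h => y⁻¹ * h) ⁻¹' K'⁻¹ := by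
          ext x
          simp only [hs_def, mem_preimage, mem_setOf_eq, hy, and_true, Set.mem_inv]
          constructor
          · intro h; simpa [mul_inv_rev] using (inv_mem_inv (s := K')).mpr h
          · intro h; simpa [mul_inv_rev] using (inv_mem_inv (s := K')).mpr h
        rw [hset, measure_preimage_mul ν y⁻¹ K'⁻¹, indicator_of_mem hy]
        rw [hν, Measure.inv_apply, inv_inv]
      · have hset : (fun x => (x, y)) ⁻¹' s = ∅ := by
          ext x; simp [hs_def, hy]
        rw [hset, measure_empty, indicator_of_notMem hy]
    rw [h1, h2]
    simp only [h3]
    rw [lintegral_indicator hS, setLIntegral_const, mul_comm]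
  -- find a point with x • K ⊆ D (used in the trivial case)
  obtain ⟨y₀, hy₀E⟩ := nonempty_of_measure_ne_zero hE0
  by_cases hA0 : μ A = 0
  · obtain ⟨k, hk⟩ := hKne
    refine ⟨y₀ * k⁻¹, ?_, ?_⟩
    · apply hgeo
      exact ⟨y₀, ⟨k, hk, by simp [smul_eq_mul, mul_assoc]⟩, hy₀E⟩
    · have : μ ((y₀ * k⁻¹) • K ∩ A) = 0 :=
        le_antisymm (le_trans (measure_mono inter_subset_right) hA0.le) (zero_le)
      simp [this]
  -- main case
  by_contra hcon
  push_neg at hcon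
  set c : ℝ≥0∞ := μ A / d with hc
  have hAfin : μ A ≠ ⊤ := (lt_of_le_of_lt (measure_mono hAD) hDfin.lt_top).ne
  have hc0 : c ≠ 0 := by
    simp [hc, ENNReal.div_eq_zero_iff, hA0, hdfin]
  have hcfin : c ≠ ⊤ := by
    simp [hc, ENNReal.div_eq_top, hA0, hAfin, hd0]
  have hAc : μ A / c = d := by
    have hcd : c * d = μ A := ENNReal.div_mul_cancel hd0 hdfin
    exact ((ENNReal.eq_div_iff hc0 hcfin).mpr hcd).symm
  set f : G → ℝ≥0∞ := fun x => μ (x • K' ∩ E) with hf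
  set g : G → ℝ≥0∞ := fun x => μ (x • K' ∩ A) * c⁻¹ with hg
  obtain ⟨hfint, hfmeas⟩ := key E hEm
  obtain ⟨hAint, hAmeas⟩ := key A hAm
  have hgmeas : Measurable g := hAmeas.mul_const _
  have hfg : f ≤ g := by
    intro x
    by_cases hne : (x • K ∩ E).Nonempty
    · have hsubD := hgeo x hne
      have hlt := hcon x hsubD
      have h1 : f x ≤ μ (x • K) := le_trans (measure_mono inter_subset_left) (hxKK' x).le
      have h2 : μ (x • K) ≤ μ (x • K ∩ A) / c := by
        rw [ENNReal.le_div_iff_mul_le (Or.inl hc0) (Or.inl hcfin)]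
        rw [mul_comm]
        exact hlt.le
      calc f x ≤ μ (x • K ∩ A) / c := le_trans h1 h2
        _ = g x := by
            show μ (x • K ∩ A) / c = μ (x • K' ∩ A) * c⁻¹
            rw [hinterEq x A hAm, div_eq_mul_inv]
    · have hempty : x • K ∩ E = ∅ := not_nonempty_iff_eq_empty.mp hne
      have : f x = 0 := by
        show μ (x • K' ∩ E) = 0
        rw [hinterEq x E hEm, hempty, measure_empty]
      simp [this]
  have hgint : (∫⁻ x, g x ∂ν) = μ K' * d := by
    simp only [hg]
    rw [lintegral_mul_const _ hAmeas, hAint, mul_assoc, ← div_eq_mul_inv, hAc]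
  have hle1 : (∫⁻ x, f x ∂ν) ≤ ∫⁻ x, g x ∂ν := lintegral_mono hfg
  have hle2 : (∫⁻ x, g x ∂ν) ≤ ∫⁻ x, f x ∂ν := by
    rw [hgint, hfint]
    exact mul_le_mul' le_rfl hdE
  have heq : (∫⁻ x, f x ∂ν) = ∫⁻ x, g x ∂ν := le_antisymm hle1 hle2
  have hfintfin : (∫⁻ x, f x ∂ν) ≠ ⊤ := by
    rw [heq, hgint]
    exact ENNReal.mul_ne_top hK'c.measure_lt_top.ne hdfin
  have hsub0 : (∫⁻ x, g x - f x ∂ν) = 0 := by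
    rw [lintegral_sub hfmeas hfintfin (Filter.Eventually.of_forall hfg), heq, tsub_self]
  have hae : ∀ᵐ x ∂ν, g x - f x = 0 :=
    (lintegral_eq_zero_iff (hgmeas.sub hfmeas)).mp hsub0
  have hae' : ∀ᵐ x ∂ν, g x ≤ f x := by
    filter_upwards [hae] with x hx
    exact tsub_eq_zero_iff_le.mp hx
  -- find a witness
  have hW : ν (y₀ • K⁻¹) = μ K := by
    have hset : y₀ • K⁻¹ = (fun h => y₀⁻¹ * h) ⁻¹' K⁻¹ := by
      ext x
      simp [Set.mem_smul_set_iff_inv_smul_mem, smul_eq_mul]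
    rw [hset, measure_preimage_mul ν y₀⁻¹ K⁻¹, hν, Measure.inv_apply, inv_inv]
  have hWpos : ν (y₀ • K⁻¹) ≠ 0 := by rw [hW]; exact hK0
  have hN : ν {x | ¬ g x ≤ f x} = 0 := ae_iff.mp hae'
  have hWN : ¬ (y₀ • K⁻¹ ⊆ {x | ¬ g x ≤ f x}) := by
    intro hsub
    exact hWpos (le_antisymm (le_trans (measure_mono hsub) hN.le) (zero_le))
  obtain ⟨x, hxW, hxN⟩ := not_subset.mp hWN
  simp only [mem_setOf_eq, not_not] at hxN
  -- properties at x
  obtain ⟨k, hkinv, hxk⟩ := hxW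
  have hy₀x : y₀ ∈ x • K := by
    refine ⟨k⁻¹, Set.inv_mem_inv.mp (by simpa using hkinv), ?_⟩
    rw [← hxk]; simp [smul_eq_mul, mul_assoc]
  have hne : (x • K ∩ E).Nonempty := ⟨y₀, hy₀x, hy₀E⟩
  have hsubD := hgeo x hne
  have hlt := hcon x hsubD
  have hm : μ (x • K) < μ (x • K ∩ A) * c⁻¹ := by
    rw [← div_eq_mul_inv]
    by_contra hnot
    push_neg at hnot
    have : μ (x • K ∩ A) ≤ μ (x • K) * c :=
      (ENNReal.div_le_iff_le_mul (Or.inl hc0) (Or.inl hcfin)).mp hnot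
    rw [mul_comm] at this
    exact absurd (lt_of_lt_of_le hlt this) (lt_irrefl _)
  have hfx : f x ≤ μ (x • K) := le_trans (measure_mono inter_subset_left) (hxKK' x).le
  have hgx : g x = μ (x • K ∩ A) * c⁻¹ := by
    show μ (x • K' ∩ A) * c⁻¹ = μ (x • K ∩ A) * c⁻¹
    rw [hinterEq x A hAm]
  have : g x < g x := by
    calc g x ≤ f x := hxN
      _ ≤ μ (x • K) := hfx
      _ < μ (x • K ∩ A) * c⁻¹ := hm
      _ = g x := hgx.symm
  exact absurd this (lt_irrefl _)
end

section
/- For any subsets K, E, F of G, the K-boundary of Int_K(E) \ Int_K(F) is contained in ∂_K(Int_K(E)) ∪ (∂_K(Int_K(F)) ∩ E). -/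
open Set
open scoped Pointwise

/-- The `K`-interior of `E`. -/
def kInterior {G : Type*} [Group G] (K E : Set G) : Set G :=
  E \ kBoundary K E

/-- `∂_K(Int_K(E) \ Int_K(F)) ⊆ ∂_K(Int_K(E)) ∪ (∂_K(Int_K(F)) ∩ E)`. -/
theorem stmt6 {G : Type*} [Group G] (K E F : Set G) :
    kBoundary K (kInterior K E \ kInterior K F) ⊆
      kBoundary K (kInterior K E) ∪ (kBoundary K (kInterior K F) ∩ E) := by
  intro x hx
  simp only [kBoundary, mem_iUnion, mem_setOf_eq, exists_prop] at hx
  obtain ⟨g, ⟨⟨a, ha, haAB⟩, ⟨b, hb, hbc⟩⟩, hxg⟩ := hx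
  by_cases h : ((g • K) ∩ (kInterior K E)ᶜ).Nonempty
  · left
    simp only [kBoundary, mem_iUnion, mem_setOf_eq, exists_prop]
    exact ⟨g, ⟨⟨a, ha, haAB.1⟩, h⟩, hxg⟩
  · have hsub : g • K ⊆ kInterior K E := fun y hy => by
      by_contra hyc
      exact h ⟨y, hy, hyc⟩
    have hbB : b ∈ kInterior K F := by
      have hbA := hsub hb
      by_contra hbB
      exact (hbc : b ∉ _) ⟨hbA, hbB⟩
    right
    constructor
    · simp only [kBoundary, mem_iUnion, mem_setOf_eq, exists_prop]
      exact ⟨g, ⟨⟨b, hb, hbB⟩, ⟨a, ha, haAB.2⟩⟩, hxg⟩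
    · exact (hsub hxg).1
end

section
/- Let ε < 1. If E ⊆ G is (ε, K⁻¹K)-boundary-invariant, then Int_K(E) is (ε/(1−ε), K)-boundary-invariant. In particular ∂_K(Int_K(E)) ⊆ ∂_{K⁻¹K}(E) and |Int_K(E)| ≥ (1−ε)|E|. -/
open MeasureTheory Set
open scoped ENNReal Pointwise

lemma smul_subset_of_mem {G : Type*} [Group G] {K : Set G} {g x : G}
    (hx : x ∈ g • K) : g • K ⊆ x • (K⁻¹ * K) := by
  obtain ⟨k₀, hk₀, rfl⟩ := hx
  rintro _ ⟨k, hk, rfl⟩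
  refine ⟨k₀⁻¹ * k, mul_mem_mul ?_ hk, by simp only [smul_eq_mul]; group⟩
  simpa using hk₀

lemma mem_kBoundary_iff {G : Type*} [Group G] {K E : Set G} {x : G} :
    x ∈ kBoundary K E ↔
      ∃ g : G, (((g • K) ∩ E).Nonempty ∧ ((g • K) ∩ Eᶜ).Nonempty) ∧ x ∈ g • K := by
  simp [kBoundary]

lemma kBoundary_subset {G : Type*} [Group G] (K E : Set G) :
    kBoundary K E ⊆ kBoundary (K⁻¹ * K) E := by
  intro x hx
  rw [mem_kBoundary_iff] at hx
  obtain ⟨g, ⟨⟨p, hpK, hpE⟩, ⟨q, hqK, hqE⟩⟩, hx⟩ := hx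
  have hsub := smul_subset_of_mem hpK
  exact mem_kBoundary_iff.mpr ⟨p, ⟨⟨p, hsub hpK, hpE⟩, ⟨q, hsub hqK, hqE⟩⟩, hsub hx⟩

lemma kBoundary_kInterior_subset {G : Type*} [Group G] (K E : Set G) :
    kBoundary K (kInterior K E) ⊆ kBoundary (K⁻¹ * K) E := by
  intro x hx
  rw [mem_kBoundary_iff] at hx
  obtain ⟨g, ⟨⟨p, hpK, hpI⟩, ⟨q, hqK, hqI⟩⟩, hx⟩ := hx
  by_cases hqE : q ∈ E
  · -- q ∈ E but q ∉ interior, so q ∈ kBoundary K E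
    have hqB : q ∈ kBoundary K E := by
      by_contra hqB
      exact hqI ⟨hqE, hqB⟩
    rw [mem_kBoundary_iff] at hqB
    obtain ⟨h', ⟨_, ⟨r, hrK, hrE⟩⟩, hqK'⟩ := hqB
    have hsub := smul_subset_of_mem hqK
    have hsub' := smul_subset_of_mem hqK'
    exact mem_kBoundary_iff.mpr
      ⟨q, ⟨⟨q, hsub hqK, hqE⟩, ⟨r, hsub' hrK, hrE⟩⟩, hsub hx⟩
  · have hsub := smul_subset_of_mem hpK
    exact mem_kBoundary_iff.mpr
      ⟨p, ⟨⟨p, hsub hpK, hpI.1⟩, ⟨q, hsub hqK, hqE⟩⟩, hsub hx⟩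

/-- If `E` is `(ε, K⁻¹K)`-boundary-invariant with `ε < 1` then `Int_K(E)` is
`(ε/(1-ε), K)`-boundary-invariant; moreover `∂_K(Int_K(E)) ⊆ ∂_{K⁻¹K}(E)` and
`|Int_K(E)| ≥ (1-ε)|E|`. -/
theorem stmt7 {G : Type*} [Group G] [TopologicalSpace G] [IsTopologicalGroup G]
    [LocallyCompactSpace G] [SecondCountableTopology G]
    [MeasurableSpace G] [BorelSpace G]
    (μ : Measure G) [μ.IsMulRightInvariant] [IsFiniteMeasureOnCompacts μ]
    (K E : Set G) (hK : IsCompact K) (hE : MeasurableSet E) (hEfin : μ E ≠ ⊤)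
    (ε : ℝ≥0∞) (hε : ε < 1)
    (h : μ (kBoundary (K⁻¹ * K) E) ≤ ε * μ E) :
    kBoundary K (kInterior K E) ⊆ kBoundary (K⁻¹ * K) E ∧
    (1 - ε) * μ E ≤ μ (kInterior K E) ∧
    μ (kBoundary K (kInterior K E)) ≤ ε / (1 - ε) * μ (kInterior K E) := by
  have hBsub := kBoundary_kInterior_subset K E
  have hB : μ (kBoundary K E) ≤ ε * μ E :=
    le_trans (measure_mono (kBoundary_subset K E)) h
  have hInt : (1 - ε) * μ E ≤ μ (kInterior K E) := by
    have h1 : μ E ≤ μ (kInterior K E) + μ (kBoundary K E) := by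
      refine le_trans (measure_mono ?_) (measure_union_le _ _)
      intro x hx
      by_cases hb : x ∈ kBoundary K E
      · exact Or.inr hb
      · exact Or.inl ⟨hx, hb⟩
    have h2 : μ E - ε * μ E ≤ μ (kInterior K E) := by
      rw [tsub_le_iff_right]
      exact le_trans h1 (by gcongr)
    calc (1 - ε) * μ E = 1 * μ E - ε * μ E := by
          rw [ENNReal.sub_mul]; intro _ _; exact hEfin
      _ = μ E - ε * μ E := by rw [one_mul]
      _ ≤ μ (kInterior K E) := h2
  refine ⟨hBsub, hInt, ?_⟩
  have h1ε : (1 : ℝ≥0∞) - ε ≠ 0 := by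
    simpa [tsub_eq_zero_iff_le] using hε.not_ge
  have h1ε' : (1 : ℝ≥0∞) - ε ≠ ⊤ := by
    exact ne_top_of_le_ne_top ENNReal.one_ne_top tsub_le_self
  calc μ (kBoundary K (kInterior K E)) ≤ ε * μ E := le_trans (measure_mono hBsub) h
    _ = ε / (1 - ε) * ((1 - ε) * μ E) := by
        rw [← mul_assoc, ENNReal.div_mul_cancel h1ε h1ε']
    _ ≤ ε / (1 - ε) * μ (kInterior K E) := by gcongr
end

section
/- In the classical (commutative) setting: let (P_k) be an atomic filtration of partitions of a measure space Ω with conditional expectations E_k, let n < k, and let E be an atom of P_k that is (2^{n−k}, F_n)-invariant (as a subset of the group G = Ω with right Haar measure). Then for f = c·1_E with c ≥ 0 a constant, ‖A_n(f) − E_n(f)‖₁ ≤ 2·2^{n−k}‖f‖₁, where A_n is the average over right translates of F_n. -/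
open MeasureTheory Set
open scoped ENNReal Pointwise

private lemma integral_le_toReal_lintegral {G : Type*} [MeasurableSpace G] (μ : Measure G)
    (g : G → ℝ) (hg : ∀ x, 0 ≤ g x) :
    ∫ x, g x ∂μ ≤ (∫⁻ x, ENNReal.ofReal (g x) ∂μ).toReal := by
  by_cases h : Integrable g μ
  · rw [integral_eq_lintegral_of_nonneg_ae (Filter.Eventually.of_forall hg) h.1]
  · rw [integral_undef h]
    exact ENNReal.toReal_nonneg

/-- Local estimate for `n < k`: if `E` is an atom of `P_k` that is
`(2^{n-k}, F_n)`-invariant and `f = c·1_E` (so that `E_n(f) = f`), then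
`‖A_n(f) − E_n(f)‖₁ ≤ 2·2^{n-k}‖f‖₁`. -/
theorem stmt10 {G : Type*} [Group G] [TopologicalSpace G] [IsTopologicalGroup G]
    [LocallyCompactSpace G] [SecondCountableTopology G]
    [MeasurableSpace G] [BorelSpace G]
    (μ : Measure G) [μ.IsMulRightInvariant] [IsFiniteMeasureOnCompacts μ]
    (Fn E : Set G) (hFn : IsCompact Fn) (hFn0 : μ Fn ≠ 0) (hFnfin : μ Fn ≠ ⊤)
    (hE : MeasurableSet E) (hEfin : μ E ≠ ⊤)
    (n k : ℕ) (hnk : n < k)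
    (hinv1 : μ ((E * Fn) \ E) ≤ ENNReal.ofReal ((2 : ℝ) ^ ((n : ℤ) - k)) * μ E)
    (hinv2 : μ ((E * Fn⁻¹) \ E) ≤ ENNReal.ofReal ((2 : ℝ) ^ ((n : ℤ) - k)) * μ E)
    (c : ℝ) (hc : 0 ≤ c)
    (f Enf : G → ℝ)
    (hf : f = fun x => c * E.indicator (fun _ => (1 : ℝ)) x)
    (hEn : Enf = f) :
    ∫ x, |(μ Fn).toReal⁻¹ * (∫ y in Fn, f (x * y) ∂μ) - Enf x| ∂μ
      ≤ 2 * (2 : ℝ) ^ ((n : ℤ) - k) * ∫ x, |f x| ∂μ := by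
  subst hEn hf
  set ε : ℝ≥0∞ := ENNReal.ofReal ((2 : ℝ) ^ ((n : ℤ) - k)) with hε
  set t : ℝ := (μ Fn).toReal with ht
  have htpos : 0 < t := ENNReal.toReal_pos hFn0 hFnfin
  -- the symmetric-difference kernel
  set S : Set (G × G) := ((fun p : G × G => p.1) ⁻¹' E \ (fun p : G × G => p.1 * p.2) ⁻¹' E)
      ∪ ((fun p : G × G => p.1 * p.2) ⁻¹' E \ (fun p : G × G => p.1) ⁻¹' E) with hS
  have hSmeas : MeasurableSet S := by
    have h1 : MeasurableSet ((fun p : G × G => p.1) ⁻¹' E) := measurable_fst hE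
    have h2 : MeasurableSet ((fun p : G × G => p.1 * p.2) ⁻¹' E) :=
      (measurable_fst.mul measurable_snd) hE
    exact (h1.diff h2).union (h2.diff h1)
  set h : G → ℝ≥0∞ := fun x => ∫⁻ y in Fn, S.indicator 1 (x, y) ∂μ with hh
  -- pointwise identity
  have hpoint : ∀ x, ENNReal.ofReal
      |t⁻¹ * (∫ y in Fn, c * E.indicator (fun _ => (1 : ℝ)) (x * y) ∂μ)
        - c * E.indicator (fun _ => (1 : ℝ)) x|
      = ENNReal.ofReal c * (μ Fn)⁻¹ * h x := by
    intro x
    set T : Set G := (fun y => x * y) ⁻¹' E with hT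
    have hTmeas : MeasurableSet T := (measurable_const_mul x) hE
    have hIT : (∫ y in Fn, c * E.indicator (fun _ => (1 : ℝ)) (x * y) ∂μ)
        = c * (μ (Fn ∩ T)).toReal := by
      have : (fun y => c * E.indicator (fun _ => (1 : ℝ)) (x * y))
          = fun y => c * T.indicator (fun _ => (1 : ℝ)) y := by
        funext y
        by_cases hy : x * y ∈ E <;>
          simp [hT, Set.indicator, hy]
      rw [this, integral_const_mul, setIntegral_indicator hTmeas, setIntegral_const]
      simp [Measure.real]
    have hmfin : μ (Fn ∩ T) ≠ ⊤ := fun hcon =>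
      hFnfin (top_le_iff.mp (hcon ▸ measure_mono inter_subset_left))
    have hmle : (μ (Fn ∩ T)).toReal ≤ t :=
      ENNReal.toReal_mono hFnfin (measure_mono inter_subset_left)
    have hofr_tinv : ENNReal.ofReal t⁻¹ = (μ Fn)⁻¹ := by
      rw [ENNReal.ofReal_inv_of_pos htpos, ENNReal.ofReal_toReal hFnfin]
    by_cases hx : x ∈ E
    · -- h x = μ (Fn \ T)
      have hhx : h x = μ (Fn ∩ Tᶜ) := by
        have : ∀ y, S.indicator (1 : G × G → ℝ≥0∞) (x, y)
            = Tᶜ.indicator (fun _ => (1 : ℝ≥0∞)) y := by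
          intro y
          by_cases hy : x * y ∈ E <;> simp [hS, hT, Set.indicator, hx, hy]
        rw [hh]
        simp only [this]
        rw [setLIntegral_indicator hTmeas.compl, setLIntegral_one, Set.inter_comm]
      have habs : |t⁻¹ * (c * (μ (Fn ∩ T)).toReal) - c * E.indicator (fun _ => (1 : ℝ)) x|
          = c * t⁻¹ * (t - (μ (Fn ∩ T)).toReal) := by
        rw [Set.indicator_of_mem hx]
        have h1 : t⁻¹ * (c * (μ (Fn ∩ T)).toReal) - c * 1 ≤ 0 := by
          have h2 : t⁻¹ * (μ (Fn ∩ T)).toReal ≤ 1 := by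
            rw [inv_mul_le_iff₀ htpos]; simpa using hmle
          nlinarith [mul_le_mul_of_nonneg_left h2 hc]
        rw [abs_of_nonpos h1]
        field_simp
        ring
      have hsub : μ (Fn ∩ Tᶜ) = μ Fn - μ (Fn ∩ T) := by
        have hkey := measure_inter_add_diff (μ := μ) Fn hTmeas
        have hFnT : Fn ∩ Tᶜ = Fn \ T := (Set.diff_eq Fn T).symm
        rw [hFnT]
        exact ENNReal.eq_sub_of_add_eq hmfin (by rw [add_comm]; exact hkey)
      rw [hIT, habs, hhx, hsub]
      rw [ENNReal.ofReal_mul (by positivity), ENNReal.ofReal_mul hc, hofr_tinv]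
      congr 1
      rw [← ENNReal.toReal_sub_of_le (measure_mono inter_subset_left) hFnfin,
        ENNReal.ofReal_toReal]
      exact fun hcon => hFnfin (top_le_iff.mp (hcon ▸ tsub_le_self.trans le_rfl))
    · have hhx : h x = μ (Fn ∩ T) := by
        have : ∀ y, S.indicator (1 : G × G → ℝ≥0∞) (x, y)
            = T.indicator (fun _ => (1 : ℝ≥0∞)) y := by
          intro y
          by_cases hy : x * y ∈ E <;> simp [hS, hT, Set.indicator, hx, hy]
        rw [hh]
        simp only [this]
        rw [setLIntegral_indicator hTmeas, setLIntegral_one, Set.inter_comm]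
      have habs : |t⁻¹ * (c * (μ (Fn ∩ T)).toReal) - c * E.indicator (fun _ => (1 : ℝ)) x|
          = c * t⁻¹ * (μ (Fn ∩ T)).toReal := by
        rw [Set.indicator_of_notMem hx]
        rw [mul_zero, sub_zero, abs_of_nonneg (by positivity)]
        ring
      rw [hIT, habs, hhx]
      rw [ENNReal.ofReal_mul (by positivity), ENNReal.ofReal_mul hc, hofr_tinv,
        ENNReal.ofReal_toReal hmfin]
  -- bound on the lintegral of h
  have hhbound : ∫⁻ x, h x ∂μ ≤ μ Fn * (2 * (ε * μ E)) := by
    have hswap : ∫⁻ x, h x ∂μ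
        = ∫⁻ y in Fn, (∫⁻ x, S.indicator 1 (x, y) ∂μ) ∂μ := by
      exact lintegral_lintegral_swap ((measurable_one.indicator hSmeas).aemeasurable)
    rw [hswap]
    have hinner : ∀ y ∈ Fn, (∫⁻ x, S.indicator 1 (x, y) ∂μ) ≤ 2 * (ε * μ E) := by
      intro y hy
      have hTy : ∀ x : G, S.indicator (1 : G × G → ℝ≥0∞) (x, y)
          = ({x | x ∈ E ∧ x * y ∉ E} ∪ {x | x ∉ E ∧ x * y ∈ E}).indicator
              (fun _ => (1 : ℝ≥0∞)) x := by
        intro x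
        by_cases hx : x ∈ E <;> by_cases hxy : x * y ∈ E <;>
          simp [hS, Set.indicator, hx, hxy]
      have hU1 : MeasurableSet {x : G | x ∈ E ∧ x * y ∉ E} :=
        hE.inter ((measurable_mul_const y) hE.compl)
      have hU2 : MeasurableSet {x : G | x ∉ E ∧ x * y ∈ E} :=
        hE.compl.inter ((measurable_mul_const y) hE)
      simp only [hTy]
      rw [lintegral_indicator (hU1.union hU2), setLIntegral_one]
      have hb1 : μ {x : G | x ∈ E ∧ x * y ∉ E} ≤ ε * μ E := by
        have hpre : {x : G | x ∈ E ∧ x * y ∉ E}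
            = (fun x => x * y) ⁻¹' {z : G | z * y⁻¹ ∈ E ∧ z ∉ E} := by
          ext x; simp [mul_inv_cancel_right]
        rw [hpre, measure_preimage_mul_right]
        refine le_trans (measure_mono ?_) hinv1
        rintro z ⟨hz1, hz2⟩
        exact ⟨⟨z * y⁻¹, hz1, y, hy, by simp⟩, hz2⟩
      have hb2 : μ {x : G | x ∉ E ∧ x * y ∈ E} ≤ ε * μ E := by
        refine le_trans (measure_mono ?_) hinv2
        rintro x ⟨hx1, hx2⟩
        exact ⟨⟨x * y, hx2, y⁻¹, Set.inv_mem_inv.mpr hy, by simp⟩, hx1⟩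
      calc μ ({x : G | x ∈ E ∧ x * y ∉ E} ∪ {x : G | x ∉ E ∧ x * y ∈ E})
          ≤ μ {x : G | x ∈ E ∧ x * y ∉ E} + μ {x : G | x ∉ E ∧ x * y ∈ E} :=
            measure_union_le _ _
        _ ≤ ε * μ E + ε * μ E := add_le_add hb1 hb2
        _ = 2 * (ε * μ E) := by ring
    calc ∫⁻ y in Fn, (∫⁻ x, S.indicator 1 (x, y) ∂μ) ∂μ
        ≤ ∫⁻ _ in Fn, 2 * (ε * μ E) ∂μ := setLIntegral_mono measurable_const hinner
      _ = 2 * (ε * μ E) * μ Fn := setLIntegral_const _ _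
      _ = μ Fn * (2 * (ε * μ E)) := mul_comm _ _
  -- the main lintegral bound
  have hmain : ∫⁻ x, ENNReal.ofReal
      |t⁻¹ * (∫ y in Fn, c * E.indicator (fun _ => (1 : ℝ)) (x * y) ∂μ)
        - c * E.indicator (fun _ => (1 : ℝ)) x| ∂μ
      ≤ ENNReal.ofReal c * (2 * (ε * μ E)) := by
    calc ∫⁻ x, ENNReal.ofReal
          |t⁻¹ * (∫ y in Fn, c * E.indicator (fun _ => (1 : ℝ)) (x * y) ∂μ)
            - c * E.indicator (fun _ => (1 : ℝ)) x| ∂μ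
        = ∫⁻ x, ENNReal.ofReal c * (μ Fn)⁻¹ * h x ∂μ := lintegral_congr hpoint
      _ = ENNReal.ofReal c * (μ Fn)⁻¹ * ∫⁻ x, h x ∂μ :=
          lintegral_const_mul' _ _ (by
            exact ENNReal.mul_ne_top ENNReal.ofReal_ne_top (ENNReal.inv_ne_top.mpr hFn0))
      _ ≤ ENNReal.ofReal c * (μ Fn)⁻¹ * (μ Fn * (2 * (ε * μ E))) := by
          gcongr
      _ = ENNReal.ofReal c * (((μ Fn)⁻¹ * μ Fn) * (2 * (ε * μ E))) := by ring
      _ = ENNReal.ofReal c * (2 * (ε * μ E)) := by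
          rw [ENNReal.inv_mul_cancel hFn0 hFnfin, one_mul]
  -- compute the L¹ norm of f
  have hfL1 : ∫ x, |c * E.indicator (fun _ => (1 : ℝ)) x| ∂μ = c * (μ E).toReal := by
    have : (fun x => |c * E.indicator (fun _ => (1 : ℝ)) x|)
        = fun x => c * E.indicator (fun _ => (1 : ℝ)) x := by
      funext x
      by_cases hx : x ∈ E <;> simp [Set.indicator, hx, abs_of_nonneg hc]
    rw [this, integral_const_mul, integral_indicator hE, setIntegral_const]
    simp [Measure.real]
  -- finish
  have hle := integral_le_toReal_lintegral μ
    (fun x => |t⁻¹ * (∫ y in Fn, c * E.indicator (fun _ => (1 : ℝ)) (x * y) ∂μ)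
      - c * E.indicator (fun _ => (1 : ℝ)) x|) (fun x => abs_nonneg _)
  refine le_trans hle ?_
  have hfin : ENNReal.ofReal c * (2 * (ε * μ E)) ≠ ⊤ :=
    ENNReal.mul_ne_top ENNReal.ofReal_ne_top
      (ENNReal.mul_ne_top (by simp) (ENNReal.mul_ne_top ENNReal.ofReal_ne_top hEfin))
  refine le_trans (ENNReal.toReal_mono hfin hmain) ?_
  rw [hfL1]
  rw [ENNReal.toReal_mul, ENNReal.toReal_mul, ENNReal.toReal_mul,
    ENNReal.toReal_ofReal hc, ENNReal.toReal_ofReal (by positivity)]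
  simp only [ENNReal.toReal_ofNat]
  ring_nf
  exact le_of_eq (by ring)
end

section
/- Let f ∈ L¹(G) (scalar-valued) with ∫_A f = 0 for every atom A of the partition P_k, and suppose every atom of P_k is contained in a left translate of the compact set B_k, and F_n is (2^{k−n}, B_k)-boundary-invariant with n ≥ k. Then ‖A_n(f)‖₁ ≤ 2^{k−n}‖f‖₁, where A_n(f)(x) = |xF_n|⁻¹∫_{xF_n} f. -/
open MeasureTheory Set
open scoped ENNReal Pointwise

/-- Scaling of a right-invariant measure under left translation: the pushforward of `μ`
under left multiplication by `x` is a (finite, nonzero) scalar multiple of `μ`. -/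
lemma map_mul_left_eq_smul_aux {G : Type*} [Group G] [TopologicalSpace G] [IsTopologicalGroup G]
    [LocallyCompactSpace G] [SecondCountableTopology G]
    [MeasurableSpace G] [BorelSpace G]
    (μ : Measure G) [μ.IsMulRightInvariant] [IsFiniteMeasureOnCompacts μ]
    (K : Set G) (hK : IsCompact K) (hK0 : μ K ≠ 0) (x : G) :
    ∃ c : ℝ≥0∞, c ≠ 0 ∧ c ≠ ⊤ ∧ Measure.map (fun y => x * y) μ = c • μ := by
  haveI : IsFiniteMeasureOnCompacts μ.inv :=
    ⟨fun C hC => by rw [Measure.inv_apply]; exact hC.inv.measure_lt_top⟩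
  haveI : μ.inv.IsOpenPosMeasure := by
    refine isOpenPosMeasure_of_mulLeftInvariant_of_compact K⁻¹ hK.inv ?_
    rw [Measure.inv_apply, inv_inv]; exact hK0
  haveI : μ.inv.IsHaarMeasure := ⟨⟩
  set ν : Measure G := Measure.map (fun y => y * x⁻¹) μ.inv with hν
  haveI : ν.IsMulLeftInvariant := by
    constructor
    intro g
    rw [hν, Measure.map_map (measurable_const_mul g) (measurable_mul_const x⁻¹),
      show ((g * ·) ∘ (· * x⁻¹)) = ((· * x⁻¹) ∘ (g * ·)) from funext fun y => (mul_assoc ..).symm,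
      ← Measure.map_map (measurable_mul_const x⁻¹) (measurable_const_mul g),
      map_mul_left_eq_self _ g]
  haveI : IsFiniteMeasureOnCompacts ν := by
    constructor
    intro C hC
    obtain ⟨C', hC', hCC'⟩ := exists_compact_superset hC
    have h1 : ν C ≤ ν (interior C') := measure_mono hCC'
    rw [hν, Measure.map_apply (measurable_mul_const x⁻¹) isOpen_interior.measurableSet] at h1
    refine h1.trans_lt ((measure_mono ?_).trans_lt
      ((hC'.image (continuous_mul_right x)).measure_lt_top))
    intro y hy
    exact ⟨y * x⁻¹, interior_subset hy, by simp⟩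
  have huniq : ν = (Measure.haarScalarFactor ν μ.inv : ℝ≥0∞) • μ.inv := by
    rw [← ENNReal.smul_def]
    exact Measure.isMulLeftInvariant_eq_smul ν μ.inv
  set c : ℝ≥0∞ := (Measure.haarScalarFactor ν μ.inv : ℝ≥0∞) with hcdef
  have hmap : Measure.map (fun y => x * y) μ = c • μ := by
    have h3 : Measure.map (fun y => x * y) μ = ν.inv := by
      show _ = Measure.map Inv.inv ν
      rw [hν]
      show _ = Measure.map Inv.inv (Measure.map _ (Measure.map Inv.inv μ))
      rw [Measure.map_map (measurable_mul_const x⁻¹) measurable_inv,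
        Measure.map_map measurable_inv ((measurable_mul_const x⁻¹).comp measurable_inv)]
      congr 1
      funext y
      simp [Function.comp, mul_inv_rev]
    rw [h3, huniq]
    show Measure.map Inv.inv _ = _
    rw [Measure.map_smul]
    congr 1
    exact Measure.inv_inv μ
  have huniv : (Measure.map (fun y => x * y) μ) Set.univ = μ Set.univ := by
    rw [Measure.map_apply (measurable_const_mul x) MeasurableSet.univ, Set.preimage_univ]
  refine ⟨c, ?_, ?_, hmap⟩
  · intro hc
    rw [hmap, hc] at huniv
    simp only [Measure.smul_apply, smul_eq_mul, zero_mul] at huniv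
    exact hK0 (le_antisymm ((measure_mono (Set.subset_univ K)).trans huniv.symm.le) bot_le)
  · obtain ⟨K', hK', hKK'⟩ := exists_compact_superset hK
    have hEmeas : MeasurableSet (toMeasurable μ K ∩ interior K') :=
      (measurableSet_toMeasurable μ K).inter isOpen_interior.measurableSet
    have hEK : μ (toMeasurable μ K ∩ interior K') = μ K :=
      le_antisymm ((measure_mono Set.inter_subset_left).trans_eq (measure_toMeasurable K))
        (measure_mono (Set.subset_inter (subset_toMeasurable μ K) hKK'))
    have hev : (Measure.map (fun y => x * y) μ) (toMeasurable μ K ∩ interior K')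
        = μ ((fun y => x * y) ⁻¹' (toMeasurable μ K ∩ interior K')) :=
      Measure.map_apply (measurable_const_mul x) hEmeas
    have hlt : μ ((fun y => x * y) ⁻¹' (toMeasurable μ K ∩ interior K')) < ⊤ := by
      refine (measure_mono ?_).trans_lt ((hK'.image (continuous_mul_left x⁻¹)).measure_lt_top)
      intro y hy
      exact ⟨x * y, interior_subset hy.2, by simp⟩
    intro hc
    rw [hmap, hc] at hev
    simp only [Measure.smul_apply, smul_eq_mul] at hev
    rw [hEK, ENNReal.top_mul hK0] at hev
    exact hlt.ne hev.symm

set_option maxHeartbeats 1000000 in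
/-- Local estimate for `n ≥ k`: if `f` has vanishing integral on every atom of a
partition whose atoms are contained in left translates of `B_k`, and `F_n` is
`(2^{k-n}, B_k)`-boundary-invariant, then `‖A_n(f)‖₁ ≤ 2^{k-n}‖f‖₁`, where
`A_n(f)(x) = |xF_n|⁻¹ ∫_{xF_n} f`. -/
theorem stmt11 {G : Type*} [Group G] [TopologicalSpace G] [IsTopologicalGroup G]
    [LocallyCompactSpace G] [SecondCountableTopology G]
    [MeasurableSpace G] [BorelSpace G]
    (μ : Measure G) [μ.IsMulRightInvariant] [IsFiniteMeasureOnCompacts μ]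
    (Bk Fn : Set G) (hBk : IsCompact Bk) (hFn : IsCompact Fn)
    (hFn0 : μ Fn ≠ 0) (hFnfin : μ Fn ≠ ⊤)
    (k n : ℕ) (hkn : k ≤ n)
    (ι : Type*) [Countable ι] (atoms : ι → Set G)
    (hmeas : ∀ i, MeasurableSet (atoms i))
    (hdisj : Pairwise (Function.onFun Disjoint atoms))
    (hcover : (⋃ i, atoms i) = univ)
    (htrans : ∀ i, ∃ g : G, atoms i ⊆ g • Bk)
    (f : G → ℝ) (hf : Integrable f μ)
    (hzero : ∀ i, ∫ x in atoms i, f x ∂μ = 0)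
    (hbd : μ (kBoundary Bk Fn) ≤ ENNReal.ofReal ((2 : ℝ) ^ ((k : ℤ) - n)) * μ Fn) :
    ∫ x, |(μ (x • Fn)).toReal⁻¹ * ∫ z in x • Fn, f z ∂μ| ∂μ
      ≤ (2 : ℝ) ^ ((k : ℤ) - n) * ∫ x, |f x| ∂μ := by
  classical
  -- replace f by a strongly measurable representative f'
  obtain ⟨f', hf'm, hff'⟩ : ∃ f' : G → ℝ, StronglyMeasurable f' ∧ f =ᵐ[μ] f' :=
    ⟨hf.1.mk f, hf.1.stronglyMeasurable_mk, hf.1.ae_eq_mk⟩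
  have hf' : Integrable f' μ := hf.congr hff'
  have hset : ∀ s : Set G, ∫ z in s, f z ∂μ = ∫ z in s, f' z ∂μ :=
    fun s => integral_congr_ae (ae_restrict_of_ae hff')
  have habs : ∫ x, |f x| ∂μ = ∫ x, |f' x| ∂μ :=
    integral_congr_ae (hff'.mono fun x hx => by dsimp only; rw [hx])
  have hzero' : ∀ i, ∫ x in atoms i, f' x ∂μ = 0 := fun i => (hset _).symm.trans (hzero i)
  simp only [hset, habs]
  -- the scaling function
  choose c hc0 hctop hcmap using fun x : G =>
    map_mul_left_eq_smul_aux μ Fn hFn hFn0 x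
  have hpre : ∀ (x : G) (A : Set G), (fun y => x * y) ⁻¹' A = x⁻¹ • A := by
    intro x A
    ext y
    simp [Set.mem_smul_set_iff_inv_smul_mem, smul_eq_mul]
  have hmeasA : ∀ (x : G) (A : Set G), MeasurableSet A → μ (x • A) = c x⁻¹ * μ A := by
    intro x A hA
    have h := congrArg (fun m : Measure G => m A) (hcmap x⁻¹)
    simp only [Measure.smul_apply, smul_eq_mul] at h
    rw [Measure.map_apply (measurable_const_mul x⁻¹) hA, hpre, inv_inv] at h
    exact h
  have hgen : ∀ (x : G) (A : Set G), μ (x • A) = c x⁻¹ * μ A := by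
    intro x A
    apply le_antisymm
    · calc μ (x • A) ≤ μ (x • toMeasurable μ A) :=
            measure_mono (Set.smul_set_mono (subset_toMeasurable μ A))
        _ = c x⁻¹ * μ (toMeasurable μ A) :=
            hmeasA x (toMeasurable μ A) (measurableSet_toMeasurable μ A)
        _ = c x⁻¹ * μ A := by rw [measure_toMeasurable]
    · have hAM : A ⊆ x⁻¹ • toMeasurable μ (x • A) := by
        intro a ha
        rw [Set.mem_smul_set_iff_inv_smul_mem, inv_inv]
        exact subset_toMeasurable μ (x • A) (Set.smul_mem_smul_set ha)
      calc c x⁻¹ * μ A ≤ c x⁻¹ * μ (x⁻¹ • toMeasurable μ (x • A)) :=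
            mul_le_mul_right (measure_mono hAM) _
        _ = μ (x • x⁻¹ • toMeasurable μ (x • A)) :=
            (hmeasA x _ ((measurableSet_toMeasurable μ _).const_smul x⁻¹)).symm
        _ = μ (toMeasurable μ (x • A)) := by rw [smul_inv_smul]
        _ = μ (x • A) := measure_toMeasurable _
  -- positivity/finiteness of μ (x • Fn)
  have hm0 : ∀ x : G, μ (x • Fn) ≠ 0 := fun x => by
    rw [hgen x Fn]; exact mul_ne_zero (hc0 _) hFn0
  have hmtop : ∀ x : G, μ (x • Fn) ≠ ⊤ := fun x =>
    (hFn.image (continuous_const_smul x)).measure_lt_top.ne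
  -- the measurable boundary superset
  set D := toMeasurable μ (kBoundary Bk Fn) with hD
  have hDmeas : MeasurableSet D := measurableSet_toMeasurable μ _
  have hDsub : kBoundary Bk Fn ⊆ D := subset_toMeasurable μ _
  have hDμ : μ D = μ (kBoundary Bk Fn) := measure_toMeasurable _
  -- Step A: pointwise estimate
  have stepA : ∀ x : G, |∫ z in x • Fn, f' z ∂μ| ≤ ∫ z in x • D, |f' z| ∂μ := by
    intro x
    -- classification of atoms
    have hclass : ∀ i, (∫ z, f' z ∂(μ.restrict (atoms i ∩ x • Fn)) = 0) ∨ atoms i ⊆ x • D := by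
      intro i
      by_cases h1 : (atoms i ∩ x • Fn) = ∅
      · left; rw [h1]; simp
      by_cases h2 : atoms i ⊆ x • Fn
      · left
        rw [Set.inter_eq_self_of_subset_left h2]
        exact hzero' i
      right
      obtain ⟨y, hyA, hyF⟩ := Set.nonempty_iff_ne_empty.2 h1
      obtain ⟨y', hy'A, hy'F⟩ : ∃ y', y' ∈ atoms i ∧ y' ∉ x • Fn := by
        by_contra h
        push_neg at h
        exact h2 h
      obtain ⟨g, hg⟩ := htrans i
      have hmem : ∀ z ∈ atoms i, x⁻¹ • z ∈ (x⁻¹ * g) • Bk := by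
        intro z hz
        obtain ⟨b, hb, rfl⟩ := hg hz
        exact ⟨b, hb, by simp [smul_eq_mul, mul_assoc]⟩
      have hsub : (x⁻¹ * g) • Bk ⊆ kBoundary Bk Fn := by
        refine Set.subset_biUnion_of_mem (u := fun g => g • Bk) ?_
        constructor
        · exact ⟨x⁻¹ • y, hmem y hyA, by rwa [← Set.mem_smul_set_iff_inv_smul_mem]⟩
        · refine ⟨x⁻¹ • y', hmem y' hy'A, ?_⟩
          simp only [Set.mem_compl_iff]
          rw [← Set.mem_smul_set_iff_inv_smul_mem]
          exact hy'F
      intro z hz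
      rw [Set.mem_smul_set_iff_inv_smul_mem]
      exact hDsub (hsub (hmem z hz))
    -- sum over atoms
    have hSa : HasSum (fun i => ∫ z, f' z ∂(μ.restrict (atoms i ∩ x • Fn)))
        (∫ z in x • Fn, f' z ∂μ) := by
      have h0 := hasSum_integral_iUnion (μ := μ.restrict (x • Fn)) hmeas hdisj
        ((hf'.mono_measure Measure.restrict_le_self).integrableOn)
      rw [hcover, setIntegral_univ] at h0
      have heq : (fun i => ∫ z in atoms i, f' z ∂(μ.restrict (x • Fn)))
          = fun i => ∫ z, f' z ∂(μ.restrict (atoms i ∩ x • Fn)) :=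
        funext fun i => by rw [← Measure.restrict_restrict (hmeas i)]
      rwa [heq] at h0
    have hSb : HasSum (fun i => ∫ z, |f' z| ∂(μ.restrict (atoms i ∩ (x • D ∩ x • Fn))))
        (∫ z, |f' z| ∂(μ.restrict (x • D ∩ x • Fn))) := by
      have h0 := hasSum_integral_iUnion (μ := μ.restrict (x • D ∩ x • Fn)) hmeas hdisj
        ((hf'.abs.mono_measure Measure.restrict_le_self).integrableOn)
      rw [hcover, setIntegral_univ] at h0
      have heq : (fun i => ∫ z in atoms i, |f' z| ∂(μ.restrict (x • D ∩ x • Fn)))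
          = fun i => ∫ z, |f' z| ∂(μ.restrict (atoms i ∩ (x • D ∩ x • Fn))) :=
        funext fun i => by rw [← Measure.restrict_restrict (hmeas i)]
      rwa [heq] at h0
    have hab : ∀ i, |∫ z, f' z ∂(μ.restrict (atoms i ∩ x • Fn))|
        ≤ ∫ z, |f' z| ∂(μ.restrict (atoms i ∩ (x • D ∩ x • Fn))) := by
      intro i
      rcases hclass i with h | h
      · rw [h, abs_zero]
        exact integral_nonneg fun z => abs_nonneg _
      · have heq : atoms i ∩ (x • D ∩ x • Fn) = atoms i ∩ x • Fn := by
          rw [← Set.inter_assoc, Set.inter_eq_self_of_subset_left h]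
        rw [heq]
        calc |∫ z, f' z ∂(μ.restrict (atoms i ∩ x • Fn))|
            ≤ ∫ z, |f' z| ∂(μ.restrict (atoms i ∩ x • Fn)) := by
              simpa [Real.norm_eq_abs] using
                norm_integral_le_integral_norm (μ := μ.restrict (atoms i ∩ x • Fn)) f'
          _ = _ := rfl
    have hsummable : Summable fun i => |∫ z, f' z ∂(μ.restrict (atoms i ∩ x • Fn))| :=
      Summable.of_nonneg_of_le (fun i => abs_nonneg _) hab hSb.summable
    calc |∫ z in x • Fn, f' z ∂μ|
        = |∑' i, ∫ z, f' z ∂(μ.restrict (atoms i ∩ x • Fn))| := by rw [hSa.tsum_eq]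
      _ ≤ ∑' i, |∫ z, f' z ∂(μ.restrict (atoms i ∩ x • Fn))| := by
          have h := norm_tsum_le_tsum_norm
            (f := fun i => ∫ z, f' z ∂(μ.restrict (atoms i ∩ x • Fn)))
            (by simpa only [Real.norm_eq_abs] using hsummable)
          simpa only [Real.norm_eq_abs] using h
      _ ≤ ∑' i, ∫ z, |f' z| ∂(μ.restrict (atoms i ∩ (x • D ∩ x • Fn))) :=
          Summable.tsum_le_tsum hab hsummable hSb.summable
      _ = ∫ z, |f' z| ∂(μ.restrict (x • D ∩ x • Fn)) := hSb.tsum_eq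
      _ ≤ ∫ z in x • D, |f' z| ∂μ :=
          integral_mono_measure (Measure.restrict_mono Set.inter_subset_left le_rfl)
            (ae_of_all _ fun z => abs_nonneg _) (hf'.abs.restrict)
  -- main lintegral estimate
  set q : ℝ≥0∞ := ENNReal.ofReal ((2 : ℝ) ^ ((k : ℤ) - n)) with hq
  set L : ℝ≥0∞ := ∫⁻ z, (‖f' z‖₊ : ℝ≥0∞) ∂μ with hLdef
  have hLfin : L ≠ ⊤ := hf'.2.ne
  have point : ∀ x : G, ENNReal.ofReal |(μ (x • Fn)).toReal⁻¹ * ∫ z in x • Fn, f' z ∂μ|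
      ≤ (μ Fn)⁻¹ * ∫⁻ w, Set.indicator D (fun v => (‖f' (x * v)‖₊ : ℝ≥0∞)) w ∂μ := by
    intro x
    have h1 : ENNReal.ofReal |(μ (x • Fn)).toReal⁻¹ * ∫ z in x • Fn, f' z ∂μ|
        = (μ (x • Fn))⁻¹ * ENNReal.ofReal |∫ z in x • Fn, f' z ∂μ| := by
      rw [abs_mul, abs_of_nonneg (inv_nonneg.2 ENNReal.toReal_nonneg),
        ENNReal.ofReal_mul (inv_nonneg.2 ENNReal.toReal_nonneg),
        ENNReal.ofReal_inv_of_pos (ENNReal.toReal_pos (hm0 x) (hmtop x)),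
        ENNReal.ofReal_toReal (hmtop x)]
    have h2 : ENNReal.ofReal |∫ z in x • Fn, f' z ∂μ|
        ≤ ∫⁻ z in x • D, (‖f' z‖₊ : ℝ≥0∞) ∂μ := by
      calc ENNReal.ofReal |∫ z in x • Fn, f' z ∂μ|
          ≤ ENNReal.ofReal (∫ z in x • D, |f' z| ∂μ) := ENNReal.ofReal_le_ofReal (stepA x)
        _ = ∫⁻ z in x • D, (‖f' z‖₊ : ℝ≥0∞) ∂μ := by
            have := ofReal_integral_norm_eq_lintegral_enorm (hf'.restrict (s := x • D))
            exact (by simpa [Real.norm_eq_abs] using this :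
              ENNReal.ofReal (∫ z in x • D, |f' z| ∂μ) = ∫⁻ z in x • D, ‖f' z‖ₑ ∂μ)
    have h3 : ∫⁻ z in x • D, (‖f' z‖₊ : ℝ≥0∞) ∂μ
        = c x⁻¹ * ∫⁻ w, Set.indicator D (fun v => (‖f' (x * v)‖₊ : ℝ≥0∞)) w ∂μ := by
      have hgmeas : Measurable (fun v => Set.indicator D (fun v => (‖f' (x * v)‖₊ : ℝ≥0∞)) v) :=
        Measurable.indicator
          ((hf'm.measurable.comp (measurable_const_mul x)).nnnorm.coe_nnreal_ennreal) hDmeas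
      rw [← lintegral_indicator (hDmeas.const_smul x)]
      have heqf : Set.indicator (x • D) (fun z => (‖f' z‖₊ : ℝ≥0∞))
          = fun z => Set.indicator D (fun v => (‖f' (x * v)‖₊ : ℝ≥0∞)) (x⁻¹ * z) := by
        funext z
        by_cases hz : z ∈ x • D
        · have hz' : x⁻¹ * z ∈ D := Set.mem_smul_set_iff_inv_smul_mem.mp hz
          rw [Set.indicator_of_mem hz, Set.indicator_of_mem hz']
          simp
        · have hz' : x⁻¹ * z ∉ D := fun hmem => hz (Set.mem_smul_set_iff_inv_smul_mem.mpr hmem)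
          rw [Set.indicator_of_notMem hz, Set.indicator_of_notMem hz']
      rw [heqf, ← lintegral_map hgmeas (measurable_const_mul x⁻¹), hcmap x⁻¹,
        lintegral_smul_measure, smul_eq_mul]
    rw [h1]
    calc (μ (x • Fn))⁻¹ * ENNReal.ofReal |∫ z in x • Fn, f' z ∂μ|
        ≤ (μ (x • Fn))⁻¹ * ∫⁻ z in x • D, (‖f' z‖₊ : ℝ≥0∞) ∂μ := mul_le_mul_right h2 _
      _ = (μ (x • Fn))⁻¹ * (c x⁻¹ * ∫⁻ w, Set.indicator D (fun v => (‖f' (x * v)‖₊ : ℝ≥0∞)) w ∂μ) := by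
          rw [h3]
      _ = (μ Fn)⁻¹ * ∫⁻ w, Set.indicator D (fun v => (‖f' (x * v)‖₊ : ℝ≥0∞)) w ∂μ := by
          rw [hgen x Fn, ENNReal.mul_inv (Or.inl (hc0 x⁻¹)) (Or.inl (hctop x⁻¹))]
          generalize (∫⁻ w, Set.indicator D (fun v => (‖f' (x * v)‖₊ : ℝ≥0∞)) w ∂μ) = X
          rw [show ((c x⁻¹)⁻¹ * (μ Fn)⁻¹) * (c x⁻¹ * X)
              = ((c x⁻¹)⁻¹ * c x⁻¹) * ((μ Fn)⁻¹ * X) from by ring,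
            ENNReal.inv_mul_cancel (hc0 x⁻¹) (hctop x⁻¹), one_mul]
  have hmeasF2 : AEMeasurable
      (fun p : G × G => Set.indicator D (fun v => (‖f' (p.1 * p.2)‖₊ : ℝ≥0∞)) p.2) (μ.prod μ) := by
    have hrw : (fun p : G × G => Set.indicator D (fun v => (‖f' (p.1 * p.2)‖₊ : ℝ≥0∞)) p.2)
        = fun p : G × G => Set.indicator D (fun _ => (1 : ℝ≥0∞)) p.2 * (‖f' (p.1 * p.2)‖₊ : ℝ≥0∞) := by
      funext p
      by_cases hp : p.2 ∈ D <;> simp [hp]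
    rw [hrw]
    exact (((measurable_one.indicator hDmeas).comp measurable_snd).mul
      ((hf'm.measurable.comp (measurable_fst.mul measurable_snd)).nnnorm.coe_nnreal_ennreal)).aemeasurable
  have main : ∫⁻ x, ENNReal.ofReal |(μ (x • Fn)).toReal⁻¹ * ∫ z in x • Fn, f' z ∂μ| ∂μ ≤ q * L := by
    calc ∫⁻ x, ENNReal.ofReal |(μ (x • Fn)).toReal⁻¹ * ∫ z in x • Fn, f' z ∂μ| ∂μ
        ≤ ∫⁻ x, (μ Fn)⁻¹ * ∫⁻ w, Set.indicator D (fun v => (‖f' (x * v)‖₊ : ℝ≥0∞)) w ∂μ ∂μ :=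
          lintegral_mono point
      _ = (μ Fn)⁻¹ * ∫⁻ x, ∫⁻ w, Set.indicator D (fun v => (‖f' (x * v)‖₊ : ℝ≥0∞)) w ∂μ ∂μ :=
          lintegral_const_mul' _ _ (ENNReal.inv_ne_top.2 hFn0)
      _ = (μ Fn)⁻¹ * ∫⁻ w, ∫⁻ x, Set.indicator D (fun v => (‖f' (x * v)‖₊ : ℝ≥0∞)) w ∂μ ∂μ := by
          rw [lintegral_lintegral_swap hmeasF2]
      _ = (μ Fn)⁻¹ * ∫⁻ w, Set.indicator D (fun _ => L) w ∂μ := by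
          congr 1
          refine lintegral_congr fun w => ?_
          by_cases hw : w ∈ D
          · simp only [Set.indicator_of_mem hw]
            exact lintegral_mul_right_eq_self (fun z => (‖f' z‖₊ : ℝ≥0∞)) w
          · simp [Set.indicator_of_notMem hw]
      _ = (μ Fn)⁻¹ * (L * μ D) := by rw [lintegral_indicator_const hDmeas]
      _ ≤ (μ Fn)⁻¹ * (L * (q * μ Fn)) := by
          refine mul_le_mul_right (mul_le_mul_right ?_ L) _
          rw [hDμ]
          exact hbd
      _ = q * L := by
          generalize hXL : L = X
          rw [show (μ Fn)⁻¹ * (X * (q * μ Fn)) = ((μ Fn)⁻¹ * μ Fn) * (q * X) from by ring,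
            ENNReal.inv_mul_cancel hFn0 hFnfin, one_mul]
  -- wrap up
  by_cases hI : Integrable (fun x => |(μ (x • Fn)).toReal⁻¹ * ∫ z in x • Fn, f' z ∂μ|) μ
  · rw [integral_eq_lintegral_of_nonneg_ae (ae_of_all _ fun x => abs_nonneg _) hI.1]
    have hqL : q * L ≠ ⊤ := ENNReal.mul_ne_top ENNReal.ofReal_ne_top hLfin
    refine (ENNReal.toReal_mono hqL main).trans ?_
    rw [ENNReal.toReal_mul, hq, ENNReal.toReal_ofReal (by positivity)]
    have hLr : ∫ x, |f' x| ∂μ = L.toReal := by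
      rw [hLdef, integral_eq_lintegral_of_nonneg_ae (ae_of_all _ fun x => abs_nonneg _) hf'.abs.1]
      congr 1
      exact lintegral_congr fun z => by rw [← Real.norm_eq_abs]; exact ofReal_norm _
    rw [hLr]
  · rw [integral_undef hI]
    exact mul_nonneg (zpow_nonneg (by norm_num) _) (integral_nonneg fun z => abs_nonneg _)
end

section
/- (Good part L²-estimate, commutative case) With Cuculescu's sets as above, set p_k = q_{k+1} − q_k (indicator differences), and define g = q_0 f_0 q_0 + Σ_{k≥0} E_{k+1}(p_k f_k p_k). Then ‖g‖₂² ≤ 2λ‖f‖₁. -/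
open MeasureTheory Set
open scoped ENNReal

/-- The conditional expectation of `f` with respect to an atomic partition,
given by averaging `f` over the atom `atom k ω` containing `ω`. -/
noncomputable def ce {Ω : Type*} [MeasurableSpace Ω] (μ : Measure Ω)
    (atom : ℕ → Ω → Set Ω) (k : ℕ) (f : Ω → ℝ) (ω : Ω) : ℝ :=
  (μ (atom k ω)).toReal⁻¹ * ∫ x in atom k ω, f x ∂μ

section Aux
variable {Ω : Type*} [MeasurableSpace Ω] {μ : Measure Ω} [SigmaFinite μ]
    {atom : ℕ → Ω → Set Ω}
    (hmem : ∀ k ω, ω ∈ atom k ω)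
    (hmeas : ∀ k ω, MeasurableSet (atom k ω))
    (hfin : ∀ k ω, μ (atom k ω) ≠ ⊤)
    (hpos : ∀ k ω, μ (atom k ω) ≠ 0)
    (hpart : ∀ k (ω ω' : Ω), (atom k ω ∩ atom k ω').Nonempty → atom k ω = atom k ω')
    (hnest : ∀ k ω, atom k ω ⊆ atom (k + 1) ω)

include hmem hpart in
lemma atom_eq {k : ℕ} {ω ω' : Ω} (h : ω' ∈ atom k ω) : atom k ω' = atom k ω :=
  hpart k ω' ω ⟨ω', hmem k ω', h⟩

include hnest in
lemma atom_mono {k j : ℕ} (hkj : k ≤ j) (ω : Ω) : atom k ω ⊆ atom j ω := by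
  induction j with
  | zero => simp_all
  | succ n ih =>
    rcases Nat.lt_or_ge k (n+1) with h | h
    · exact (ih (by omega)).trans (hnest n ω)
    · have : k = n + 1 := by omega
      subst this; exact subset_rfl

include hmem hpart in
lemma ce_congr {k : ℕ} {ω ω' : Ω} (h : ω' ∈ atom k ω) (f : Ω → ℝ) :
    ce μ atom k f ω' = ce μ atom k f ω := by
  unfold ce; rw [atom_eq hmem hpart h]

/-- a canonical representative of the atom of ω -/
noncomputable def rep (atom : ℕ → Ω → Set Ω) (hmem : ∀ k ω, ω ∈ atom k ω) (k : ℕ) (ω : Ω) : Ω :=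
  Set.Nonempty.some (s := atom k ω) ⟨ω, hmem k ω⟩

include hmem in
lemma rep_mem (k : ℕ) (ω : Ω) : rep atom hmem k ω ∈ atom k ω :=
  Set.Nonempty.some_mem _

include hmem hpart in
lemma rep_congr {k : ℕ} {ω ω' : Ω} (h : ω' ∈ atom k ω) :
    rep atom hmem k ω' = rep atom hmem k ω := by
  have hs : atom k ω' = atom k ω := atom_eq hmem hpart h
  unfold rep
  congr 1

include hmem hpart in
lemma rep_fix (k : ℕ) (ω : Ω) : rep atom hmem k (rep atom hmem k ω) = rep atom hmem k ω :=
  rep_congr hmem hpart (rep_mem hmem k ω)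

/-- the set of representatives at level k -/
def reps (atom : ℕ → Ω → Set Ω) (hmem : ∀ k ω, ω ∈ atom k ω) (k : ℕ) : Set Ω :=
  Set.range (rep atom hmem k)

include hmem hpart in
lemma reps_disjoint {k : ℕ} {t t' : Ω} (ht : t ∈ reps atom hmem k) (ht' : t' ∈ reps atom hmem k)
    (hne : t ≠ t') : Disjoint (atom k t) (atom k t') := by
  rw [Set.disjoint_iff_inter_eq_empty]
  by_contra hx
  have hne' : (atom k t ∩ atom k t').Nonempty := Set.nonempty_iff_ne_empty.2 hx
  have heq : atom k t = atom k t' := hpart k t t' hne'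
  obtain ⟨ω, rfl⟩ := ht
  obtain ⟨ω', rfl⟩ := ht'
  apply hne
  calc rep atom hmem k ω = rep atom hmem k (rep atom hmem k ω) := (rep_fix hmem hpart k ω).symm
    _ = rep atom hmem k (rep atom hmem k ω') := by
        apply rep_congr hmem hpart
        rw [← heq]; exact hmem _ _
    _ = rep atom hmem k ω' := rep_fix hmem hpart k ω'

include hmem hmeas hpos hpart in
lemma reps_countable (k : ℕ) : (reps atom hmem k).Countable := by
  have := Measure.countable_meas_pos_of_disjoint_iUnion (μ := μ)
    (As := fun t : ↥(reps atom hmem k) => atom k t)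
    (fun t => hmeas k t)
    (by
      intro t t' hne
      exact reps_disjoint hmem hpart t.2 t'.2 (Subtype.coe_injective.ne hne))
  have huniv : {t : ↥(reps atom hmem k) | 0 < μ (atom k t)} = Set.univ := by
    ext t; simp [pos_iff_ne_zero, hpos k t.1]
  rw [huniv, Set.countable_univ_iff] at this
  exact (Set.countable_coe_iff).1 this

end Aux

/-- S is a union of level-k atoms -/
def Sat {Ω : Type*} (atom : ℕ → Ω → Set Ω) (k : ℕ) (S : Set Ω) : Prop :=
  ∀ ω ∈ S, atom k ω ⊆ S

section Aux2
variable {Ω : Type*} [MeasurableSpace Ω] {μ : Measure Ω} [SigmaFinite μ]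
    {atom : ℕ → Ω → Set Ω}
    (hmem : ∀ k ω, ω ∈ atom k ω)
    (hmeas : ∀ k ω, MeasurableSet (atom k ω))
    (hfin : ∀ k ω, μ (atom k ω) ≠ ⊤)
    (hpos : ∀ k ω, μ (atom k ω) ≠ 0)
    (hpart : ∀ k (ω ω' : Ω), (atom k ω ∩ atom k ω').Nonempty → atom k ω = atom k ω')
    (hnest : ∀ k ω, atom k ω ⊆ atom (k + 1) ω)

include hmem hpart in
lemma sat_eq_iUnion {k : ℕ} {S : Set Ω} (hS : Sat atom k S) :
    S = ⋃ t : ↥(reps atom hmem k ∩ S), atom k t := by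
  ext ω
  constructor
  · intro hω
    have h1 : rep atom hmem k ω ∈ atom k ω := rep_mem hmem k ω
    have h2 : ω ∈ atom k (rep atom hmem k ω) := by
      rw [atom_eq hmem hpart h1]; exact hmem k ω
    exact Set.mem_iUnion.2 ⟨⟨rep atom hmem k ω, ⟨⟨ω, rfl⟩, hS ω hω h1⟩⟩, h2⟩
  · rintro hω
    obtain ⟨⟨t, ht, htS⟩, h⟩ := Set.mem_iUnion.1 hω
    exact hS t htS h

include hmem hmeas hpos hpart in
lemma lintegral_decomp {k : ℕ} {S : Set Ω} (hSm : MeasurableSet S) (hS : Sat atom k S)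
    (H : Ω → ℝ≥0∞) :
    ∫⁻ x in S, H x ∂μ = ∑' t : ↥(reps atom hmem k ∩ S), ∫⁻ x in atom k (t : Ω), H x ∂μ := by
  have hcnt : (reps atom hmem k ∩ S).Countable :=
    (reps_countable hmem hmeas hpos hpart (μ := μ) k).mono Set.inter_subset_left
  have := hcnt.to_subtype
  conv_lhs => rw [sat_eq_iUnion hmem hpart hS]
  exact lintegral_iUnion (fun t : ↥(reps atom hmem k ∩ S) => hmeas k (t : Ω))
    (fun t t' hne => reps_disjoint hmem hpart t.2.1 t'.2.1 (Subtype.coe_injective.ne hne)) H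

include hmem hmeas hpos hpart in
lemma measurable_of_const {k : ℕ} {u : Ω → ℝ}
    (hu : ∀ ω ω', ω' ∈ atom k ω → u ω' = u ω) : Measurable u := by
  intro B hB
  have hcnt : {t | t ∈ reps atom hmem k ∧ u t ∈ B}.Countable :=
    (reps_countable hmem hmeas hpos hpart (μ := μ) k).mono (fun t ht => ht.1)
  have := hcnt.to_subtype
  have : u ⁻¹' B = ⋃ t : ↥{t | t ∈ reps atom hmem k ∧ u t ∈ B}, atom k (t : Ω) := by
    ext ω
    constructor
    · intro hω
      have h1 : rep atom hmem k ω ∈ atom k ω := rep_mem hmem k ω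
      have h2 : ω ∈ atom k (rep atom hmem k ω) := by
        rw [atom_eq hmem hpart h1]; exact hmem k ω
      refine Set.mem_iUnion.2 ⟨⟨rep atom hmem k ω, ⟨ω, rfl⟩, ?_⟩, h2⟩
      rw [hu ω _ h1]; exact hω
    · intro hω
      obtain ⟨⟨t, ht, htB⟩, h⟩ := Set.mem_iUnion.1 hω
      have : u ω = u t := hu t ω h
      simpa [Set.mem_preimage, this] using htB
  rw [this]
  exact MeasurableSet.iUnion (fun t => hmeas k t)

include hmem hmeas hpos hpart in
lemma measurable_ce (k : ℕ) (h : Ω → ℝ) : Measurable (ce μ atom k h) :=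
  measurable_of_const hmem hmeas hpos hpart (fun _ _ hx => ce_congr hmem hpart hx h)

include hmeas in
lemma ce_nonneg (k : ℕ) {h : Ω → ℝ} (h0 : ∀ x, 0 ≤ h x) (ω : Ω) : 0 ≤ ce μ atom k h ω :=
  mul_nonneg (by positivity) (setIntegral_nonneg (hmeas k ω) (fun x _ => h0 x))

include hfin hpos in
lemma ofReal_ce {k : ℕ} {h : Ω → ℝ} (hint : Integrable h μ) (h0 : ∀ x, 0 ≤ h x) (ω : Ω) :
    ENNReal.ofReal (ce μ atom k h ω) =
      (μ (atom k ω))⁻¹ * ∫⁻ x in atom k ω, ENNReal.ofReal (h x) ∂μ := by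
  have hμpos : 0 < (μ (atom k ω)).toReal :=
    ENNReal.toReal_pos (hpos k ω) (hfin k ω)
  rw [ce, ENNReal.ofReal_mul (by positivity),
    MeasureTheory.ofReal_integral_eq_lintegral_ofReal (hint.restrict)
      (Filter.Eventually.of_forall h0),
    ENNReal.ofReal_inv_of_pos hμpos, ENNReal.ofReal_toReal (hfin k ω)]

include hmem hmeas hfin hpos hpart in
lemma lintegral_ofReal_ce {k : ℕ} {S : Set Ω} (hSm : MeasurableSet S) (hS : Sat atom k S)
    {h : Ω → ℝ} (hint : Integrable h μ) (h0 : ∀ x, 0 ≤ h x) :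
    ∫⁻ x in S, ENNReal.ofReal (ce μ atom k h x) ∂μ = ∫⁻ x in S, ENNReal.ofReal (h x) ∂μ := by
  rw [lintegral_decomp hmem hmeas hpos hpart hSm hS,
    lintegral_decomp hmem hmeas hpos hpart hSm hS]
  congr 1
  ext t
  have hconst : ∀ x ∈ atom k (t : Ω),
      ENNReal.ofReal (ce μ atom k h x) = ENNReal.ofReal (ce μ atom k h (t : Ω)) := by
    intro x hx
    rw [ce_congr hmem hpart hx]
  rw [setLIntegral_congr_fun (hmeas k t) hconst,
    setLIntegral_const, ofReal_ce hfin hpos hint h0, mul_comm,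
    ← mul_assoc, ENNReal.mul_inv_cancel (hpos k t) (hfin k t), one_mul]

end Aux2

section Aux3
variable {Ω : Type*} [MeasurableSpace Ω] {μ : Measure Ω} [SigmaFinite μ]
    {atom : ℕ → Ω → Set Ω}
    (hmem : ∀ k ω, ω ∈ atom k ω)
    (hmeas : ∀ k ω, MeasurableSet (atom k ω))
    (hfin : ∀ k ω, μ (atom k ω) ≠ ⊤)
    (hpos : ∀ k ω, μ (atom k ω) ≠ 0)
    (hpart : ∀ k (ω ω' : Ω), (atom k ω ∩ atom k ω').Nonempty → atom k ω = atom k ω')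
    (hnest : ∀ k ω, atom k ω ⊆ atom (k + 1) ω)
    {f : Ω → ℝ} (hf : Integrable f μ) (hf0 : ∀ ω, 0 ≤ f ω)
    {lam : ℝ} (hlam : 0 < lam)
    {Q : ℕ → Set Ω} (hQ : ∀ n, Q n = {ω | ∀ j, n ≤ j → ce μ atom j f ω ≤ lam})

include hnest in
lemma sat_mono {j k : ℕ} (hjk : j ≤ k) {S : Set Ω} (hS : Sat atom k S) : Sat atom j S :=
  fun ω hω => (atom_mono hnest hjk ω).trans (hS ω hω)

include hmem hpart hnest in
lemma atom_sat {k n : ℕ} (hkn : k ≤ n) (t : Ω) : Sat atom k (atom n t) := by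
  intro ω hω
  have : atom n ω = atom n t := atom_eq hmem hpart hω
  calc atom k ω ⊆ atom n ω := atom_mono hnest hkn ω
    _ = atom n t := this

include hQ in
lemma Q_mono {n m : ℕ} (hnm : n ≤ m) : Q n ⊆ Q m := by
  rw [hQ n, hQ m]
  intro ω hω j hj
  exact hω j (hnm.trans hj)

include hmem hpart hnest hQ in
lemma Q_sat {j n : ℕ} (hjn : j ≤ n) : Sat atom j (Q n) := by
  intro ω hω ω' hω'
  rw [hQ n] at hω ⊢
  intro i hi
  have hsub : ω' ∈ atom i ω := atom_mono hnest (hjn.trans hi) ω hω'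
  rw [ce_congr hmem hpart hsub f]
  exact hω i hi

include hmem hmeas hpos hpart hQ in
lemma Q_meas (n : ℕ) : MeasurableSet (Q n) := by
  rw [hQ n]
  have : {ω | ∀ j, n ≤ j → ce μ atom j f ω ≤ lam} =
      ⋂ j, ⋂ (_ : n ≤ j), (ce μ atom j f) ⁻¹' (Set.Iic lam) := by
    ext ω; simp [Set.mem_iInter]
  rw [this]
  exact MeasurableSet.iInter fun j => MeasurableSet.iInter fun _ =>
    (measurable_ce hmem hmeas hpos hpart j f) measurableSet_Iic

include hmem hmeas hfin hpos hpart in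
lemma integrable_ce {k : ℕ} {h : Ω → ℝ} (hint : Integrable h μ) (h0 : ∀ x, 0 ≤ h x) :
    Integrable (ce μ atom k h) μ := by
  refine ⟨(measurable_ce hmem hmeas hpos hpart k h).aestronglyMeasurable, ?_⟩
  rw [hasFiniteIntegral_iff_norm]
  have heq : ∀ x, ENNReal.ofReal ‖ce μ atom k h x‖ = ENNReal.ofReal (ce μ atom k h x) := by
    intro x
    rw [Real.norm_of_nonneg (ce_nonneg hmeas k h0 x)]
  simp only [heq]
  have := lintegral_ofReal_ce hmem hmeas hfin hpos hpart (k := k) (S := Set.univ)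
    MeasurableSet.univ (fun ω _ => Set.subset_univ _) hint h0
  rw [Measure.restrict_univ] at this
  rw [this]
  have : ∫⁻ x, ENNReal.ofReal (h x) ∂μ < ⊤ := by
    rw [← MeasureTheory.ofReal_integral_eq_lintegral_ofReal hint
      (Filter.Eventually.of_forall h0)]
    exact ENNReal.ofReal_lt_top
  exact this

include hmem hmeas hfin hpos hpart in
lemma indicator_ce {k : ℕ} {T : Set Ω} (hT : Sat atom k T) (h : Ω → ℝ) (x : Ω) :
    T.indicator (ce μ atom k h) x = ce μ atom k (T.indicator h) x := by
  by_cases hx : x ∈ T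
  · rw [Set.indicator_of_mem hx]
    unfold ce
    congr 1
    refine (setIntegral_congr_fun (hmeas k x) ?_).symm
    intro y hy
    exact Set.indicator_of_mem (hT x hx hy) h
  · rw [Set.indicator_of_notMem hx]
    unfold ce
    have : ∀ y ∈ atom k x, T.indicator h y = 0 := by
      intro y hy
      refine Set.indicator_of_notMem (fun hyT => hx ?_) h
      have : x ∈ atom k y := by
        rw [atom_eq hmem hpart hy]; exact hmem k x
      exact hT y hyT this
    rw [setIntegral_congr_fun (hmeas k x) this]
    simp

end Aux3

section Aux4
variable {Ω : Type*} [MeasurableSpace Ω] {μ : Measure Ω} [SigmaFinite μ]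
    {atom : ℕ → Ω → Set Ω}
    (hmem : ∀ k ω, ω ∈ atom k ω)
    (hmeas : ∀ k ω, MeasurableSet (atom k ω))
    (hfin : ∀ k ω, μ (atom k ω) ≠ ⊤)
    (hpos : ∀ k ω, μ (atom k ω) ≠ 0)
    (hpart : ∀ k (ω ω' : Ω), (atom k ω ∩ atom k ω').Nonempty → atom k ω = atom k ω')
    (hnest : ∀ k ω, atom k ω ⊆ atom (k + 1) ω)
    {f : Ω → ℝ} (hf : Integrable f μ) (hf0 : ∀ ω, 0 ≤ f ω)
    {lam : ℝ} (hlam : 0 < lam)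
    {Q : ℕ → Set Ω} (hQ : ∀ n, Q n = {ω | ∀ j, n ≤ j → ce μ atom j f ω ≤ lam})

/-- the summands of the good function g -/
noncomputable def vv (μ : Measure Ω) (atom : ℕ → Ω → Set Ω) (f : Ω → ℝ) (Q : ℕ → Set Ω) :
    ℕ → Ω → ℝ
  | 0 => (Q 0).indicator (ce μ atom 0 f)
  | (k+1) => ce μ atom (k+1) ((Q (k+1) \ Q k).indicator (ce μ atom k f))

/-- pieces of f -/
noncomputable def hh (f : Ω → ℝ) (Q : ℕ → Set Ω) : ℕ → Ω → ℝ
  | 0 => (Q 0).indicator f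
  | (k+1) => (Q (k+1) \ Q k).indicator f

include hmem hpart in
lemma sat_diff {k : ℕ} {S T : Set Ω} (hS : Sat atom k S) (hT : Sat atom k T) :
    Sat atom k (S \ T) := by
  rintro ω ⟨hωS, hωT⟩ y hy
  refine ⟨hS ω hωS hy, fun hyT => hωT ?_⟩
  have : ω ∈ atom k y := by rw [atom_eq hmem hpart hy]; exact hmem k ω
  exact hT y hyT this

include hmem hmeas hpos hpart hf hQ in
lemma hh_int (k : ℕ) : Integrable (hh f Q k) μ := by
  cases k with
  | zero => exact hf.indicator (Q_meas hmem hmeas hpos hpart hQ 0)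
  | succ k => exact hf.indicator ((Q_meas hmem hmeas hpos hpart hQ (k+1)).diff
      (Q_meas hmem hmeas hpos hpart hQ k))

include hf0 in
lemma hh_nonneg (k : ℕ) (x : Ω) : 0 ≤ hh f Q k x := by
  cases k with
  | zero => exact Set.indicator_nonneg (fun y _ => hf0 y) x
  | succ k => exact Set.indicator_nonneg (fun y _ => hf0 y) x

include hmeas hf0 in
lemma vv_nonneg (k : ℕ) (x : Ω) : 0 ≤ vv μ atom f Q k x := by
  cases k with
  | zero =>
    show 0 ≤ (Q 0).indicator (ce μ atom 0 f) x
    exact Set.indicator_nonneg (fun y _ => ce_nonneg hmeas 0 hf0 y) x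
  | succ k =>
    show 0 ≤ ce μ atom (k+1) ((Q (k+1) \ Q k).indicator (ce μ atom k f)) x
    exact ce_nonneg hmeas (k+1)
      (fun y => Set.indicator_nonneg (fun z _ => ce_nonneg hmeas k hf0 z) y) x

include hmem hmeas hpos hpart hQ in
lemma vv_meas (k : ℕ) : Measurable (vv μ atom f Q k) := by
  cases k with
  | zero => exact ((measurable_ce hmem hmeas hpos hpart 0 f).indicator
      (Q_meas hmem hmeas hpos hpart hQ 0))
  | succ k => exact measurable_ce hmem hmeas hpos hpart (k+1) _

include hmem hpart hnest hQ in
lemma vv_congr {k : ℕ} {ω ω' : Ω} (h : ω' ∈ atom k ω) :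
    vv μ atom f Q k ω' = vv μ atom f Q k ω := by
  cases k with
  | zero =>
    show (Q 0).indicator _ ω' = (Q 0).indicator _ ω
    have hQ0 : ω' ∈ Q 0 ↔ ω ∈ Q 0 := by
      constructor
      · intro h'
        have : ω ∈ atom 0 ω' := by rw [atom_eq hmem hpart h]; exact hmem 0 ω
        exact Q_sat hmem hpart hnest hQ (le_refl 0) ω' h' this
      · intro h'
        exact Q_sat hmem hpart hnest hQ (le_refl 0) ω h' h
    by_cases hω : ω ∈ Q 0
    · rw [Set.indicator_of_mem hω, Set.indicator_of_mem (hQ0.2 hω)]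
      exact ce_congr hmem hpart h f
    · rw [Set.indicator_of_notMem hω, Set.indicator_of_notMem (fun h' => hω (hQ0.1 h'))]
  | succ k => exact ce_congr hmem hpart h _

include hmem hmeas hfin hpos hpart hnest hf hf0 hQ in
lemma keyS {k : ℕ} {S : Set Ω} (hSm : MeasurableSet S) (hS : Sat atom k S) :
    ∫⁻ x in S, ENNReal.ofReal (vv μ atom f Q k x) ∂μ
      = ∫⁻ x in S, ENNReal.ofReal (hh f Q k x) ∂μ := by
  cases k with
  | zero =>
    have hpt : ∀ x, vv μ atom f Q 0 x = ce μ atom 0 (hh f Q 0) x := by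
      intro x
      exact indicator_ce hmem hmeas hfin hpos hpart
        (Q_sat hmem hpart hnest hQ (le_refl 0)) f x
    simp only [hpt]
    exact lintegral_ofReal_ce hmem hmeas hfin hpos hpart hSm hS
      (hh_int hmem hmeas hpos hpart hf hQ 0) (hh_nonneg hf0 0)
  | succ k =>
    have hsat : Sat atom k (Q (k+1) \ Q k) :=
      sat_diff hmem hpart (Q_sat hmem hpart hnest hQ (Nat.le_succ k))
        (Q_sat hmem hpart hnest hQ (le_refl k))
    have step1 : ∫⁻ x in S, ENNReal.ofReal (vv μ atom f Q (k+1) x) ∂μ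
        = ∫⁻ x in S, ENNReal.ofReal ((Q (k+1) \ Q k).indicator (ce μ atom k f) x) ∂μ := by
      exact lintegral_ofReal_ce hmem hmeas hfin hpos hpart hSm hS
        ((integrable_ce hmem hmeas hfin hpos hpart hf hf0).indicator
          (((Q_meas hmem hmeas hpos hpart hQ (k+1)).diff
            (Q_meas hmem hmeas hpos hpart hQ k))))
        (fun y => Set.indicator_nonneg (fun z _ => ce_nonneg hmeas k hf0 z) y)
    have hpt : ∀ x, (Q (k+1) \ Q k).indicator (ce μ atom k f) x = ce μ atom k (hh f Q (k+1)) x :=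
      fun x => indicator_ce hmem hmeas hfin hpos hpart hsat f x
    rw [step1]
    simp only [hpt]
    exact lintegral_ofReal_ce hmem hmeas hfin hpos hpart hSm (sat_mono hnest (Nat.le_succ k) hS)
      (hh_int hmem hmeas hpos hpart hf hQ (k+1)) (hh_nonneg hf0 (k+1))

include hQ in
lemma sumId (n : ℕ) (x : Ω) :
    ∑ k ∈ Finset.range (n+1), hh f Q k x = (Q n).indicator f x := by
  induction n with
  | zero => simp [hh]
  | succ n ih =>
    rw [Finset.sum_range_succ, ih]
    have hsub : Q n ⊆ Q (n+1) := Q_mono hQ (Nat.le_succ n)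
    show (Q n).indicator f x + (Q (n+1) \ Q n).indicator f x = (Q (n+1)).indicator f x
    rw [Set.indicator_sdiff hsub]
    simp

end Aux4

section Aux5
variable {Ω : Type*} [MeasurableSpace Ω] {μ : Measure Ω} [SigmaFinite μ]
    {atom : ℕ → Ω → Set Ω}
    (hmem : ∀ k ω, ω ∈ atom k ω)
    (hmeas : ∀ k ω, MeasurableSet (atom k ω))
    (hfin : ∀ k ω, μ (atom k ω) ≠ ⊤)
    (hpos : ∀ k ω, μ (atom k ω) ≠ 0)
    (hpart : ∀ k (ω ω' : Ω), (atom k ω ∩ atom k ω').Nonempty → atom k ω = atom k ω')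
    (hnest : ∀ k ω, atom k ω ⊆ atom (k + 1) ω)
    {f : Ω → ℝ} (hf : Integrable f μ) (hf0 : ∀ ω, 0 ≤ f ω)
    {lam : ℝ} (hlam : 0 < lam)
    {Q : ℕ → Set Ω} (hQ : ∀ n, Q n = {ω | ∀ j, n ≤ j → ce μ atom j f ω ≤ lam})

/-- partial sums of the good function, ENNReal valued -/
noncomputable def TT (μ : Measure Ω) (atom : ℕ → Ω → Set Ω) (f : Ω → ℝ) (Q : ℕ → Set Ω)
    (n : ℕ) (x : Ω) : ℝ≥0∞ :=
  ∑ k ∈ Finset.range n, ENNReal.ofReal (vv μ atom f Q k x)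

include hmem hmeas hfin hpos hpart hnest hf hf0 hlam hQ in
lemma keyBound (n : ℕ) (t : Ω) :
    ∫⁻ x in atom n t, ENNReal.ofReal ((Q n).indicator f x) ∂μ
      ≤ ENNReal.ofReal lam * μ (atom n t) := by
  by_cases ht : t ∈ Q n
  · have hce : ce μ atom n f t ≤ lam := by
      rw [hQ n] at ht; exact ht n (le_refl n)
    have hμpos : 0 < (μ (atom n t)).toReal := ENNReal.toReal_pos (hpos n t) (hfin n t)
    have hint : ∫ x in atom n t, f x ∂μ ≤ lam * (μ (atom n t)).toReal := by
      have : ∫ x in atom n t, f x ∂μ = (μ (atom n t)).toReal * ce μ atom n f t := by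
        rw [ce, ← mul_assoc, mul_inv_cancel₀ (ne_of_gt hμpos), one_mul]
      rw [this, mul_comm lam]
      exact mul_le_mul_of_nonneg_left hce hμpos.le
    calc ∫⁻ x in atom n t, ENNReal.ofReal ((Q n).indicator f x) ∂μ
        ≤ ∫⁻ x in atom n t, ENNReal.ofReal (f x) ∂μ := by
          refine lintegral_mono fun x => ENNReal.ofReal_le_ofReal ?_
          exact Set.indicator_le_self' (fun y _ => hf0 y) x
      _ = ENNReal.ofReal (∫ x in atom n t, f x ∂μ) :=
          (MeasureTheory.ofReal_integral_eq_lintegral_ofReal hf.restrict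
            (Filter.Eventually.of_forall hf0)).symm
      _ ≤ ENNReal.ofReal (lam * (μ (atom n t)).toReal) := ENNReal.ofReal_le_ofReal hint
      _ = ENNReal.ofReal lam * μ (atom n t) := by
          rw [ENNReal.ofReal_mul hlam.le, ENNReal.ofReal_toReal (hfin n t)]
  · have hzero : ∀ x ∈ atom n t, ENNReal.ofReal ((Q n).indicator f x) = 0 := by
      intro x hx
      have hxQ : x ∉ Q n := by
        intro hxQ
        apply ht
        have : t ∈ atom n x := by rw [atom_eq hmem hpart hx]; exact hmem n t
        exact Q_sat hmem hpart hnest hQ (le_refl n) x hxQ this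
      rw [Set.indicator_of_notMem hxQ, ENNReal.ofReal_zero]
    rw [setLIntegral_congr_fun (hmeas n t) hzero]
    simp

include hmem hmeas hfin hpos hpart hnest hf hf0 hlam hQ in
lemma termBound (n : ℕ) (t : Ω) :
    ∫⁻ x in atom n t, TT μ atom f Q (n+1) x ∂μ ≤ ENNReal.ofReal lam * μ (atom n t) := by
  have hvmeas : ∀ k, Measurable fun x => ENNReal.ofReal (vv μ atom f Q k x) :=
    fun k => ENNReal.measurable_ofReal.comp (vv_meas hmem hmeas hpos hpart hQ k)
  have hhae : ∀ k, AEMeasurable (fun x => ENNReal.ofReal (hh f Q k x)) (μ.restrict (atom n t)) :=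
    fun k => ((hh_int hmem hmeas hpos hpart hf hQ k).aemeasurable.restrict).ennreal_ofReal
  calc ∫⁻ x in atom n t, TT μ atom f Q (n+1) x ∂μ
      = ∑ k ∈ Finset.range (n+1), ∫⁻ x in atom n t, ENNReal.ofReal (vv μ atom f Q k x) ∂μ := by
        exact lintegral_finset_sum' _ (fun k _ => (hvmeas k).aemeasurable)
    _ = ∑ k ∈ Finset.range (n+1), ∫⁻ x in atom n t, ENNReal.ofReal (hh f Q k x) ∂μ := by
        refine Finset.sum_congr rfl fun k hk => ?_
        have hk' : k ≤ n := by
          have := Finset.mem_range.1 hk; omega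
        exact keyS hmem hmeas hfin hpos hpart hnest hf hf0 hQ (hmeas n t)
          (atom_sat hmem hpart hnest hk' t)
    _ = ∫⁻ x in atom n t, ∑ k ∈ Finset.range (n+1), ENNReal.ofReal (hh f Q k x) ∂μ :=
        (lintegral_finset_sum' _ (fun k _ => hhae k)).symm
    _ = ∫⁻ x in atom n t, ENNReal.ofReal ((Q n).indicator f x) ∂μ := by
        refine lintegral_congr fun x => ?_
        rw [← ENNReal.ofReal_sum_of_nonneg (fun i _ => hh_nonneg hf0 i x),
          sumId hQ n x]
    _ ≤ ENNReal.ofReal lam * μ (atom n t) :=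
        keyBound hmem hmeas hfin hpos hpart hnest hf hf0 hlam hQ n t

include hmem hmeas hfin hpos hpart hnest hf hf0 hlam hQ in
lemma adjBound (n : ℕ) :
    ∫⁻ x, (TT μ atom f Q n x + TT μ atom f Q (n+1) x) * ENNReal.ofReal (vv μ atom f Q n x) ∂μ
      ≤ 2 * ENNReal.ofReal lam * ∫⁻ x, ENNReal.ofReal (vv μ atom f Q n x) ∂μ := by
  have hTmeas : ∀ m, Measurable (TT μ atom f Q m) := fun m =>
    Finset.measurable_sum _ (fun k _ =>
      ENNReal.measurable_ofReal.comp (vv_meas hmem hmeas hpos hpart hQ k))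
  have hTmono : ∀ x, TT μ atom f Q n x ≤ TT μ atom f Q (n+1) x := fun x =>
    Finset.sum_le_sum_of_subset (Finset.range_subset_range.2 (Nat.le_succ n))
  have hsatuniv : Sat atom n (Set.univ : Set Ω) := fun ω _ => Set.subset_univ _
  have hdecomp : ∀ H : Ω → ℝ≥0∞, ∫⁻ x, H x ∂μ
      = ∑' t : ↥(reps atom hmem n ∩ Set.univ), ∫⁻ x in atom n (t : Ω), H x ∂μ := by
    intro H
    have h := lintegral_decomp hmem hmeas hpos hpart MeasurableSet.univ hsatuniv H
    rwa [Measure.restrict_univ] at h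
  rw [hdecomp (fun x => (TT μ atom f Q n x + TT μ atom f Q (n+1) x)
      * ENNReal.ofReal (vv μ atom f Q n x)),
    hdecomp (fun x => ENNReal.ofReal (vv μ atom f Q n x)), ← ENNReal.tsum_mul_left]
  refine ENNReal.tsum_le_tsum fun t => ?_
  -- per atom estimate
  have hconst : ∀ x ∈ atom n (t : Ω),
      (TT μ atom f Q n x + TT μ atom f Q (n+1) x) * ENNReal.ofReal (vv μ atom f Q n x)
        = (TT μ atom f Q n x + TT μ atom f Q (n+1) x)
          * ENNReal.ofReal (vv μ atom f Q n (t : Ω)) := by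
    intro x hx
    rw [vv_congr hmem hpart hnest hQ hx]
  have hconst2 : ∀ x ∈ atom n (t : Ω),
      ENNReal.ofReal (vv μ atom f Q n x) = ENNReal.ofReal (vv μ atom f Q n (t : Ω)) := by
    intro x hx
    rw [vv_congr hmem hpart hnest hQ hx]
  rw [setLIntegral_congr_fun (hmeas n t) hconst,
    setLIntegral_congr_fun (hmeas n t) hconst2,
    lintegral_mul_const (f := fun x => TT μ atom f Q n x + TT μ atom f Q (n+1) x) _ ((hTmeas n).add (hTmeas (n+1))), setLIntegral_const]
  have hsum : ∫⁻ x in atom n (t : Ω), (TT μ atom f Q n x + TT μ atom f Q (n+1) x) ∂μ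
      ≤ 2 * ENNReal.ofReal lam * μ (atom n (t : Ω)) := by
    rw [lintegral_add_left (hTmeas n)]
    have h1 : ∫⁻ x in atom n (t : Ω), TT μ atom f Q n x ∂μ
        ≤ ENNReal.ofReal lam * μ (atom n (t : Ω)) :=
      le_trans (lintegral_mono hTmono) (termBound hmem hmeas hfin hpos hpart hnest hf hf0 hlam hQ n t)
    have h2 := termBound hmem hmeas hfin hpos hpart hnest hf hf0 hlam hQ n t
    calc _ ≤ ENNReal.ofReal lam * μ (atom n (t : Ω)) + ENNReal.ofReal lam * μ (atom n (t : Ω)) :=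
          add_le_add h1 h2
      _ = 2 * ENNReal.ofReal lam * μ (atom n (t : Ω)) := by ring
  calc (∫⁻ x in atom n (t : Ω), (TT μ atom f Q n x + TT μ atom f Q (n+1) x) ∂μ)
        * ENNReal.ofReal (vv μ atom f Q n (t : Ω))
      ≤ 2 * ENNReal.ofReal lam * μ (atom n (t : Ω)) * ENNReal.ofReal (vv μ atom f Q n (t : Ω)) :=
        mul_le_mul_left hsum _
    _ = 2 * ENNReal.ofReal lam * (ENNReal.ofReal (vv μ atom f Q n (t : Ω)) * μ (atom n (t : Ω))) := by
        ring

include hmem hmeas hfin hpos hpart hnest hf hf0 hlam hQ in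
lemma mainInd (n : ℕ) :
    ∫⁻ x, (TT μ atom f Q n x)^2 ∂μ
      ≤ 2 * ENNReal.ofReal lam
          * ∑ k ∈ Finset.range n, ∫⁻ x, ENNReal.ofReal (vv μ atom f Q k x) ∂μ := by
  have hTmeas : ∀ m, Measurable (TT μ atom f Q m) := fun m =>
    Finset.measurable_sum _ (fun k _ =>
      ENNReal.measurable_ofReal.comp (vv_meas hmem hmeas hpos hpart hQ k))
  induction n with
  | zero => simp [TT]
  | succ n ih =>
    have hpt : ∀ x, (TT μ atom f Q (n+1) x)^2
        = (TT μ atom f Q n x)^2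
          + (TT μ atom f Q n x + TT μ atom f Q (n+1) x) * ENNReal.ofReal (vv μ atom f Q n x) := by
      intro x
      have hstep : TT μ atom f Q (n+1) x
          = TT μ atom f Q n x + ENNReal.ofReal (vv μ atom f Q n x) := Finset.sum_range_succ _ n
      rw [hstep]; ring
    simp only [hpt]
    rw [lintegral_add_left ((hTmeas n).pow_const 2)]
    calc _ ≤ (2 * ENNReal.ofReal lam
            * ∑ k ∈ Finset.range n, ∫⁻ x, ENNReal.ofReal (vv μ atom f Q k x) ∂μ)
          + 2 * ENNReal.ofReal lam * ∫⁻ x, ENNReal.ofReal (vv μ atom f Q n x) ∂μ :=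
          add_le_add ih (adjBound hmem hmeas hfin hpos hpart hnest hf hf0 hlam hQ n)
      _ = _ := by rw [Finset.sum_range_succ, mul_add]

include hmem hmeas hfin hpos hpart hnest hf hf0 hlam hQ in
lemma sumBound (n : ℕ) :
    ∑ k ∈ Finset.range n, ∫⁻ x, ENNReal.ofReal (vv μ atom f Q k x) ∂μ
      ≤ ∫⁻ x, ENNReal.ofReal (f x) ∂μ := by
  cases n with
  | zero => simp
  | succ m =>
    have hkey : ∀ k, ∫⁻ x, ENNReal.ofReal (vv μ atom f Q k x) ∂μ
        = ∫⁻ x, ENNReal.ofReal (hh f Q k x) ∂μ := by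
      intro k
      have := keyS hmem hmeas hfin hpos hpart hnest hf hf0 hQ (k := k)
        MeasurableSet.univ (fun ω _ => Set.subset_univ _)
      rwa [Measure.restrict_univ] at this
    simp only [hkey]
    have hhae : ∀ k, AEMeasurable (fun x => ENNReal.ofReal (hh f Q k x)) μ :=
      fun k => ((hh_int hmem hmeas hpos hpart hf hQ k).aemeasurable).ennreal_ofReal
    rw [← lintegral_finset_sum' _ (fun k _ => hhae k)]
    refine lintegral_mono fun x => ?_
    rw [← ENNReal.ofReal_sum_of_nonneg (fun i _ => hh_nonneg hf0 i x), sumId hQ m x]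
    exact ENNReal.ofReal_le_ofReal (Set.indicator_le_self' (fun y _ => hf0 y) x)

include hmem hmeas hfin hpos hpart hnest hf hf0 hlam hQ in
lemma Gfin (ω : Ω) : (∑' k, ENNReal.ofReal (vv μ atom f Q k ω)) ≠ ⊤ := by
  rw [tsum_eq_zero_add' ENNReal.summable]
  refine ENNReal.add_ne_top.2 ⟨ENNReal.ofReal_ne_top, ?_⟩
  -- bound each tail term
  have hterm : ∀ k, ENNReal.ofReal (vv μ atom f Q (k+1) ω)
      ≤ (μ (atom 1 ω))⁻¹ * ∫⁻ x, ENNReal.ofReal (hh f Q (k+1) x) ∂μ := by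
    intro k
    set A := atom (k+1) ω with hA
    have hconst : ∀ x ∈ A, ENNReal.ofReal (vv μ atom f Q (k+1) x)
        = ENNReal.ofReal (vv μ atom f Q (k+1) ω) := by
      intro x hx
      rw [vv_congr hmem hpart hnest hQ hx]
    have hkey : ENNReal.ofReal (vv μ atom f Q (k+1) ω) * μ A
        = ∫⁻ x in A, ENNReal.ofReal (hh f Q (k+1) x) ∂μ := by
      rw [← setLIntegral_const A _, ← setLIntegral_congr_fun (hmeas (k+1) ω)
        hconst]
      exact keyS hmem hmeas hfin hpos hpart hnest hf hf0 hQ (hmeas (k+1) ω)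
        (atom_sat hmem hpart hnest (le_refl (k+1)) ω)
    have hself : ENNReal.ofReal (vv μ atom f Q (k+1) ω)
        = ENNReal.ofReal (vv μ atom f Q (k+1) ω) * μ A * (μ A)⁻¹ := by
      rw [mul_assoc, ENNReal.mul_inv_cancel (hpos (k+1) ω) (hfin (k+1) ω), mul_one]
    rw [hself, hkey, mul_comm]
    refine mul_le_mul' ?_ ?_
    · exact ENNReal.inv_le_inv.2 (measure_mono (atom_mono hnest (by omega) ω))
    · exact setLIntegral_le_lintegral _ _
  have htail : (∑' k, ENNReal.ofReal (vv μ atom f Q (k+1) ω))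
      ≤ (μ (atom 1 ω))⁻¹ * ∫⁻ x, ENNReal.ofReal (f x) ∂μ := by
    calc (∑' k, ENNReal.ofReal (vv μ atom f Q (k+1) ω))
        ≤ ∑' k, (μ (atom 1 ω))⁻¹ * ∫⁻ x, ENNReal.ofReal (hh f Q (k+1) x) ∂μ :=
          ENNReal.tsum_le_tsum hterm
      _ = (μ (atom 1 ω))⁻¹ * ∑' k, ∫⁻ x, ENNReal.ofReal (hh f Q (k+1) x) ∂μ :=
          ENNReal.tsum_mul_left
      _ ≤ (μ (atom 1 ω))⁻¹ * ∫⁻ x, ENNReal.ofReal (f x) ∂μ := by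
          refine mul_le_mul_right ?_ _
          rw [← lintegral_tsum
            (fun k => ((hh_int hmem hmeas hpos hpart hf hQ (k+1)).aemeasurable).ennreal_ofReal)]
          refine lintegral_mono fun x => ?_
          -- pointwise: ∑' k, ofReal (hh (k+1) x) ≤ ofReal (f x)
          rw [ENNReal.tsum_eq_iSup_sum' Finset.range Finset.exists_nat_subset_range]
          refine iSup_le fun m => ?_
          rw [← ENNReal.ofReal_sum_of_nonneg (fun i _ => hh_nonneg hf0 (i+1) x)]
          refine ENNReal.ofReal_le_ofReal ?_
          have hsplit : hh f Q 0 x + ∑ k ∈ Finset.range m, hh f Q (k+1) x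
              = (Q m).indicator f x := by
            rw [← sumId hQ m x, Finset.sum_range_succ']
            ring
          have h0 : 0 ≤ hh f Q 0 x := hh_nonneg hf0 0 x
          have hle : (Q m).indicator f x ≤ f x := Set.indicator_le_self' (fun y _ => hf0 y) x
          linarith
  refine ne_top_of_le_ne_top ?_ htail
  refine ENNReal.mul_ne_top (ENNReal.inv_ne_top.2 (hpos 1 ω)) ?_
  rw [← MeasureTheory.ofReal_integral_eq_lintegral_ofReal hf (Filter.Eventually.of_forall hf0)]
  exact ENNReal.ofReal_ne_top

end Aux5

lemma monotone_iSup_sq {a : ℕ → ℝ≥0∞} (ha : Monotone a) : (⨆ n, a n)^2 = ⨆ n, (a n)^2 := by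
  apply le_antisymm
  · rw [pow_two, ENNReal.iSup_mul]
    refine iSup_le fun n => ?_
    rw [ENNReal.mul_iSup]
    refine iSup_le fun m => ?_
    calc a n * a m ≤ a (max n m) * a (max n m) :=
        mul_le_mul' (ha (le_max_left n m)) (ha (le_max_right n m))
      _ = a (max n m) ^ 2 := (pow_two _).symm
      _ ≤ ⨆ k, a k ^ 2 := le_iSup (fun k => a k ^ 2) (max n m)
  · exact iSup_le fun n => pow_le_pow_left' (le_iSup a n) 2


/-- Good part `L²`-estimate, commutative case: with Cuculescu's sets
`Q_k = {E_j f ≤ λ for all j ≥ k}`, `p_k = 1_{Q_{k+1}} - 1_{Q_k}`, and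
`g = q_0 f_0 q_0 + Σ_k E_{k+1}(p_k f_k p_k)`, one has `‖g‖₂² ≤ 2λ‖f‖₁`. -/
theorem stmt13 {Ω : Type*} [MeasurableSpace Ω] (μ : Measure Ω) [SigmaFinite μ]
    (atom : ℕ → Ω → Set Ω)
    (hmem : ∀ k ω, ω ∈ atom k ω)
    (hmeas : ∀ k ω, MeasurableSet (atom k ω))
    (hfin : ∀ k ω, μ (atom k ω) ≠ ⊤)
    (hpos : ∀ k ω, μ (atom k ω) ≠ 0)
    (hpart : ∀ k (ω ω' : Ω), (atom k ω ∩ atom k ω').Nonempty → atom k ω = atom k ω')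
    (hnest : ∀ k ω, atom k ω ⊆ atom (k + 1) ω)
    (f : Ω → ℝ) (hf : Integrable f μ) (hf0 : ∀ ω, 0 ≤ f ω)
    (M : ℝ) (hbdd : ∀ ω, f ω ≤ M)
    (lam : ℝ) (hlam : 0 < lam)
    (Q : ℕ → Set Ω) (hQ : Q = fun k => {ω | ∀ j, k ≤ j → ce μ atom j f ω ≤ lam})
    (g : Ω → ℝ)
    (hg : g = fun ω => (Q 0).indicator (ce μ atom 0 f) ω +
      ∑' k : ℕ, ce μ atom (k + 1)
        ((Q (k + 1) \ Q k).indicator (ce μ atom k f)) ω) :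
    ∫ ω, g ω ^ 2 ∂μ ≤ 2 * lam * ∫ x, f x ∂μ := by
  have hQ' : ∀ n, Q n = {ω | ∀ j, n ≤ j → ce μ atom j f ω ≤ lam} := by
    intro n; rw [hQ]
  set G : Ω → ℝ≥0∞ := fun ω => ∑' k, ENNReal.ofReal (vv μ atom f Q k ω) with hGdef
  have hGfin : ∀ ω, G ω ≠ ⊤ := fun ω =>
    Gfin hmem hmeas hfin hpos hpart hnest hf hf0 hlam hQ' ω
  have hgG : ∀ ω, g ω = (G ω).toReal := by
    intro ω
    have hsummable0 : Summable fun k => (ENNReal.ofReal (vv μ atom f Q k ω)).toReal :=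
      ENNReal.summable_toReal (hGfin ω)
    have hto : ∀ k, (ENNReal.ofReal (vv μ atom f Q k ω)).toReal = vv μ atom f Q k ω :=
      fun k => ENNReal.toReal_ofReal (vv_nonneg hmeas hf0 k ω)
    have hsummable : Summable fun k => vv μ atom f Q k ω := by
      simpa only [hto] using hsummable0
    have h1 : (G ω).toReal = ∑' k, vv μ atom f Q k ω := by
      rw [hGdef, ENNReal.tsum_toReal_eq (fun k => ENNReal.ofReal_ne_top)]
      exact tsum_congr hto
    have h2 : ∑' k, vv μ atom f Q k ω = vv μ atom f Q 0 ω + ∑' k, vv μ atom f Q (k+1) ω :=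
      Summable.tsum_eq_zero_add hsummable
    rw [hg, h1, h2]
    rfl
  have hTmeas : ∀ m, Measurable (TT μ atom f Q m) := fun m =>
    Finset.measurable_sum _ (fun k _ =>
      (vv_meas hmem hmeas hpos hpart hQ' k).ennreal_ofReal)
  have hg2meas : AEStronglyMeasurable (fun ω => g ω ^ 2) μ := by
    have hGmeas : Measurable G :=
      Measurable.ennreal_tsum (fun k => (vv_meas hmem hmeas hpos hpart hQ' k).ennreal_ofReal)
    have hgm : Measurable g := by
      have : g = fun ω => (G ω).toReal := funext hgG
      rw [this]; exact hGmeas.ennreal_toReal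
    exact (hgm.pow_const 2).aestronglyMeasurable
  rw [integral_eq_lintegral_of_nonneg_ae
    (Filter.Eventually.of_forall (fun ω => sq_nonneg (g ω))) hg2meas]
  have hpt : ∀ ω, ENNReal.ofReal (g ω ^ 2) = ⨆ n, (TT μ atom f Q n ω)^2 := by
    intro ω
    have e1 : ENNReal.ofReal (g ω ^ 2) = (G ω)^2 := by
      rw [hgG ω, ENNReal.ofReal_pow ENNReal.toReal_nonneg, ENNReal.ofReal_toReal (hGfin ω)]
    have e2 : G ω = ⨆ n, TT μ atom f Q n ω := by
      rw [hGdef]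
      exact ENNReal.tsum_eq_iSup_sum' Finset.range Finset.exists_nat_subset_range
    have hmono : Monotone fun n => TT μ atom f Q n ω := fun a b hab =>
      Finset.sum_le_sum_of_subset (Finset.range_subset_range.2 hab)
    rw [e1, e2, monotone_iSup_sq hmono]
  have hlin : ∫⁻ ω, ENNReal.ofReal (g ω ^ 2) ∂μ
      ≤ 2 * ENNReal.ofReal lam * ∫⁻ x, ENNReal.ofReal (f x) ∂μ := by
    simp only [hpt]
    rw [lintegral_iSup (fun n => (hTmeas n).pow_const 2)
      (fun a b hab ω => pow_le_pow_left' (Finset.sum_le_sum_of_subset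
        (Finset.range_subset_range.2 hab)) 2)]
    refine iSup_le fun n => ?_
    exact (mainInd hmem hmeas hfin hpos hpart hnest hf hf0 hlam hQ' n).trans
      (mul_le_mul_right (sumBound hmem hmeas hfin hpos hpart hnest hf hf0 hlam hQ' n) _)
  have hL : ∫⁻ x, ENNReal.ofReal (f x) ∂μ = ENNReal.ofReal (∫ x, f x ∂μ) :=
    (MeasureTheory.ofReal_integral_eq_lintegral_ofReal hf (Filter.Eventually.of_forall hf0)).symm
  have hne : 2 * ENNReal.ofReal lam * ∫⁻ x, ENNReal.ofReal (f x) ∂μ ≠ ⊤ := by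
    rw [hL]
    exact ENNReal.mul_ne_top (ENNReal.mul_ne_top (by simp) ENNReal.ofReal_ne_top)
      ENNReal.ofReal_ne_top
  calc (∫⁻ ω, ENNReal.ofReal (g ω ^ 2) ∂μ).toReal
      ≤ (2 * ENNReal.ofReal lam * ∫⁻ x, ENNReal.ofReal (f x) ∂μ).toReal :=
        ENNReal.toReal_mono hne hlin
    _ = 2 * lam * ∫ x, f x ∂μ := by
        rw [hL, ENNReal.toReal_mul, ENNReal.toReal_mul, ENNReal.toReal_ofReal hlam.le,
          ENNReal.toReal_ofReal (integral_nonneg (fun x => hf0 x))]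
        norm_num
end

section
/- (Hybrid part estimate, commutative case) With the notation of the Calderón–Zygmund decomposition, set h_k = p_k f_k p_k − E_{k+1}(p_k f_k p_k). Then E_{k+1}(h_k) = 0, h_k is P_k-measurable, and Σ_{k≥0} ‖h_k‖₁ ≤ 2‖f‖₁. -/
open MeasureTheory Set
open scoped ENNReal

section Aux

variable {Ω : Type*} [MeasurableSpace Ω] {μ : Measure Ω} {a : Ω → Set Ω}

/-- A single-level atomic partition. -/
structure AtomPart (μ : Measure Ω) (a : Ω → Set Ω) : Prop where
  mem : ∀ ω, ω ∈ a ω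
  meas : ∀ ω, MeasurableSet (a ω)
  fin : ∀ ω, μ (a ω) ≠ ⊤
  pos : ∀ ω, μ (a ω) ≠ 0
  part : ∀ ω ω', (a ω ∩ a ω').Nonempty → a ω = a ω'

namespace AtomPart

theorem eq_of_mem (h : AtomPart μ a) {x ω : Ω} (hx : x ∈ a ω) : a x = a ω :=
  h.part x ω ⟨x, h.mem x, hx⟩

theorem exists_reps [SigmaFinite μ] (h : AtomPart μ a) :
    ∃ T : Set Ω, T.Countable ∧ (∀ ω, ∃ t ∈ T, a ω = a t) ∧
      ∀ t ∈ T, ∀ t' ∈ T, t ≠ t' → Disjoint (a t) (a t') := by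
  classical
  rcases isEmpty_or_nonempty Ω with hE | hN
  · exact ⟨∅, Set.countable_empty, fun ω => (IsEmpty.false ω).elim,
      fun t ht => absurd ht (Set.notMem_empty t)⟩
  · set rep : Ω → Ω := fun ω => Function.invFun a (a ω) with hrep
    have harep : ∀ ω, a (rep ω) = a ω := fun ω => Function.invFun_eq ⟨ω, rfl⟩
    have hrepeq : ∀ ω ω', a ω = a ω' → rep ω = rep ω' := by
      intro ω ω' e
      simp only [hrep, e]
    have hidem : ∀ ω, rep (rep ω) = rep ω := fun ω => hrepeq _ _ (harep ω)
    set T := Set.range rep with hT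
    have hinj : ∀ t ∈ T, ∀ t' ∈ T, a t = a t' → t = t' := by
      rintro t ⟨ω, rfl⟩ t' ⟨ω', rfl⟩ e
      calc rep ω = rep (rep ω) := (hidem ω).symm
        _ = rep (rep ω') := hrepeq _ _ e
        _ = rep ω' := hidem ω'
    have hdisjT : ∀ t ∈ T, ∀ t' ∈ T, t ≠ t' → Disjoint (a t) (a t') := by
      intro t ht t' ht' hne
      rw [Set.disjoint_iff_inter_eq_empty]
      by_contra hne'
      exact hne (hinj t ht t' ht' (h.part t t' (Set.nonempty_iff_ne_empty.mpr hne')))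
    have hTc : T.Countable := by
      have hcnt := Measure.countable_meas_pos_of_disjoint_iUnion (μ := μ)
        (As := fun t : T => a t) (fun t => h.meas t) ?hd
      · have huniv : {t : T | 0 < μ (a t)} = Set.univ := by
          ext t
          simp [pos_iff_ne_zero, h.pos (t : Ω)]
        rw [huniv, Set.countable_univ_iff] at hcnt
        exact Set.countable_coe_iff.mpr hcnt
      case hd =>
        rintro ⟨t, ht⟩ ⟨t', ht'⟩ hne
        exact hdisjT t ht t' ht' (fun e => hne (Subtype.ext e))
    exact ⟨T, hTc, fun ω => ⟨rep ω, ⟨ω, rfl⟩, (harep ω).symm⟩, hdisjT⟩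

theorem measurable_of_const [SigmaFinite μ] (h : AtomPart μ a) {F : Ω → ℝ}
    (hF : ∀ ω ω', a ω = a ω' → F ω = F ω') : Measurable F := by
  obtain ⟨T, hTc, hTrep, -⟩ := h.exists_reps
  intro s hs
  have hset : F ⁻¹' s = ⋃ t ∈ {t ∈ T | F t ∈ s}, a t := by
    ext ω
    simp only [Set.mem_preimage, Set.mem_iUnion, Set.mem_setOf_eq, exists_prop]
    constructor
    · intro hω
      obtain ⟨t, htT, hat⟩ := hTrep ω
      refine ⟨t, ⟨htT, by rw [← hF ω t hat]; exact hω⟩, ?_⟩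
      rw [← hat]; exact h.mem ω
    · rintro ⟨t, ⟨htT, hFt⟩, hωt⟩
      rw [hF ω t (h.eq_of_mem hωt)]; exact hFt
  rw [hset]
  exact MeasurableSet.biUnion (hTc.mono (Set.sep_subset _ _)) fun t _ => h.meas t

theorem lintegral_avg [SigmaFinite μ] (h : AtomPart μ a) {φ : Ω → ℝ}
    (hφ : Integrable φ μ) (hφ0 : ∀ x, 0 ≤ φ x) :
    ∫⁻ ω, ENNReal.ofReal ((μ (a ω)).toReal⁻¹ * ∫ x in a ω, φ x ∂μ) ∂μ
      = ∫⁻ x, ENNReal.ofReal (φ x) ∂μ := by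
  obtain ⟨T, hTc, hTrep, hTd⟩ := h.exists_reps
  haveI : Countable T := hTc.to_subtype
  set F : Ω → ℝ := fun ω => (μ (a ω)).toReal⁻¹ * ∫ x in a ω, φ x ∂μ with hFdef
  have hcover : (⋃ t : T, a t) = Set.univ := by
    ext ω
    simp only [Set.mem_iUnion, Set.mem_univ, iff_true]
    obtain ⟨t, htT, hat⟩ := hTrep ω
    exact ⟨⟨t, htT⟩, by rw [← hat]; exact h.mem ω⟩
  have hdisj : Pairwise (Function.onFun Disjoint fun t : T => a t) := by
    rintro ⟨t, ht⟩ ⟨t', ht'⟩ hne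
    exact hTd t ht t' ht' (fun e => hne (Subtype.ext e))
  have hmeasA : ∀ t : T, MeasurableSet (a t) := fun t => h.meas t
  have key : ∀ t : T, ∫⁻ ω in a (t : Ω), ENNReal.ofReal (F ω) ∂μ
      = ∫⁻ x in a (t : Ω), ENNReal.ofReal (φ x) ∂μ := by
    intro t
    have hconst : ∀ ω ∈ a (t : Ω), ENNReal.ofReal (F ω) = ENNReal.ofReal (F (t : Ω)) := by
      intro ω hω
      have e : a ω = a (t : Ω) := h.eq_of_mem hω
      simp only [hFdef, e]
    have hμ : μ (a (t : Ω)) ≠ 0 := h.pos t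
    have hμ' : μ (a (t : Ω)) ≠ ⊤ := h.fin t
    rw [setLIntegral_congr_fun (h.meas (t : Ω)) hconst,
      setLIntegral_const]
    have h1 : ENNReal.ofReal (F (t : Ω))
        = (μ (a (t : Ω)))⁻¹ * ∫⁻ x in a (t : Ω), ENNReal.ofReal (φ x) ∂μ := by
      rw [hFdef]
      simp only
      rw [ENNReal.ofReal_mul (by positivity)]
      congr 1
      · rw [← ENNReal.toReal_inv, ENNReal.ofReal_toReal (ENNReal.inv_ne_top.2 hμ)]
      · exact ofReal_integral_eq_lintegral_ofReal hφ.integrableOn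
          (Filter.Eventually.of_forall fun x => hφ0 x)
    rw [h1, mul_right_comm, ENNReal.inv_mul_cancel hμ hμ', one_mul]
  calc ∫⁻ ω, ENNReal.ofReal (F ω) ∂μ
      = ∫⁻ ω in ⋃ t : T, a (t : Ω), ENNReal.ofReal (F ω) ∂μ := by
        rw [hcover, Measure.restrict_univ]
    _ = ∑' t : T, ∫⁻ ω in a (t : Ω), ENNReal.ofReal (F ω) ∂μ := lintegral_iUnion hmeasA hdisj _
    _ = ∑' t : T, ∫⁻ x in a (t : Ω), ENNReal.ofReal (φ x) ∂μ := tsum_congr key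
    _ = ∫⁻ x in ⋃ t : T, a (t : Ω), ENNReal.ofReal (φ x) ∂μ :=
        (lintegral_iUnion hmeasA hdisj _).symm
    _ = ∫⁻ x, ENNReal.ofReal (φ x) ∂μ := by rw [hcover, Measure.restrict_univ]

theorem integrable_avg [SigmaFinite μ] (h : AtomPart μ a) {φ : Ω → ℝ}
    (hφ : Integrable φ μ) (hφ0 : ∀ x, 0 ≤ φ x) :
    Integrable (fun ω => (μ (a ω)).toReal⁻¹ * ∫ x in a ω, φ x ∂μ) μ ∧
      ∫ ω, (μ (a ω)).toReal⁻¹ * ∫ x in a ω, φ x ∂μ ∂μ = ∫ x, φ x ∂μ := by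
  set F : Ω → ℝ := fun ω => (μ (a ω)).toReal⁻¹ * ∫ x in a ω, φ x ∂μ with hFdef
  have hF0 : ∀ ω, 0 ≤ F ω := fun ω =>
    mul_nonneg (inv_nonneg.mpr ENNReal.toReal_nonneg) (integral_nonneg fun x => hφ0 x)
  have hFm : Measurable F := h.measurable_of_const (fun ω ω' e => by simp only [hFdef, e])
  have hlin := h.lintegral_avg hφ hφ0
  have hfinφ : ∫⁻ x, ENNReal.ofReal (φ x) ∂μ < ⊤ := by
    rw [← hasFiniteIntegral_iff_ofReal (Filter.Eventually.of_forall hφ0)]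
    exact hφ.hasFiniteIntegral
  have hfinF : HasFiniteIntegral F μ := by
    rw [hasFiniteIntegral_iff_ofReal (Filter.Eventually.of_forall hF0)]
    rw [hlin]
    exact hfinφ
  have hFint : Integrable F μ := ⟨hFm.aestronglyMeasurable, hfinF⟩
  refine ⟨hFint, ?_⟩
  rw [integral_eq_lintegral_of_nonneg_ae (Filter.Eventually.of_forall hF0)
      hFm.aestronglyMeasurable,
    integral_eq_lintegral_of_nonneg_ae (Filter.Eventually.of_forall hφ0)
      hφ.aestronglyMeasurable, hlin]

end AtomPart

end Aux

/-- Hybrid part estimate, commutative case: with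
`h_k = p_k f_k p_k − E_{k+1}(p_k f_k p_k)`, one has `E_{k+1}(h_k) = 0`, `h_k`
is `P_k`-measurable, and `Σ_k ‖h_k‖₁ ≤ 2‖f‖₁`. -/
theorem stmt14 {Ω : Type*} [MeasurableSpace Ω] (μ : Measure Ω) [SigmaFinite μ]
    (atom : ℕ → Ω → Set Ω)
    (hmem : ∀ k ω, ω ∈ atom k ω)
    (hmeas : ∀ k ω, MeasurableSet (atom k ω))
    (hfin : ∀ k ω, μ (atom k ω) ≠ ⊤)
    (hpos : ∀ k ω, μ (atom k ω) ≠ 0)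
    (hpart : ∀ k (ω ω' : Ω), (atom k ω ∩ atom k ω').Nonempty → atom k ω = atom k ω')
    (hnest : ∀ k ω, atom k ω ⊆ atom (k + 1) ω)
    (f : Ω → ℝ) (hf : Integrable f μ) (hf0 : ∀ ω, 0 ≤ f ω)
    (lam : ℝ) (hlam : 0 < lam)
    (Q : ℕ → Set Ω) (hQ : Q = fun k => {ω | ∀ j, k ≤ j → ce μ atom j f ω ≤ lam})
    (h : ℕ → Ω → ℝ)
    (hh : h = fun k ω => (Q (k + 1) \ Q k).indicator (ce μ atom k f) ω -
      ce μ atom (k + 1) ((Q (k + 1) \ Q k).indicator (ce μ atom k f)) ω) :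
    (∀ k ω, ce μ atom (k + 1) (h k) ω = 0) ∧
    (∀ k (ω ω' : Ω), atom k ω = atom k ω' → h k ω = h k ω') ∧
    ∑' k : ℕ, ∫ ω, |h k ω| ∂μ ≤ 2 * ∫ x, f x ∂μ := by
  classical
  have AP : ∀ k, AtomPart μ (atom k) := fun k => ⟨hmem k, hmeas k, hfin k, hpos k, hpart k⟩
  -- nesting for arbitrary levels
  have hnest' : ∀ k j, k ≤ j → ∀ ω, atom k ω ⊆ atom j ω := by
    intro k j hkj
    induction j, hkj using Nat.le_induction with
    | base => exact fun ω => subset_rfl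
    | succ j hj ih => exact fun ω => (ih ω).trans (hnest j ω)
  have atom_eq : ∀ k j, k ≤ j → ∀ ω ω', atom k ω = atom k ω' → atom j ω = atom j ω' := by
    intro k j hkj ω ω' e
    apply hpart j
    exact ⟨ω', hnest' k j hkj ω (by rw [e]; exact hmem k ω'), hmem j ω'⟩
  have ce_congr : ∀ j (g : Ω → ℝ) ω ω', atom j ω = atom j ω' →
      ce μ atom j g ω = ce μ atom j g ω' := fun j g ω ω' e => by simp only [ce, e]
  have ce_meas : ∀ j (g : Ω → ℝ), Measurable (ce μ atom j g) := fun j g =>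
    (AP j).measurable_of_const (fun ω ω' e => ce_congr j g ω ω' e)
  -- properties of Q
  have hQmono : ∀ {k m : ℕ}, k ≤ m → Q k ⊆ Q m := by
    intro k m hkm ω hω
    rw [hQ] at hω ⊢
    exact fun j hj => hω j (le_trans hkm hj)
  have hQatom : ∀ k m, k ≤ m → ∀ ω ω', atom k ω = atom k ω' → (ω ∈ Q m ↔ ω' ∈ Q m) := by
    intro k m hkm ω ω' e
    rw [hQ]
    simp only [Set.mem_setOf_eq]
    constructor
    · intro hω j hj
      rw [← ce_congr j f ω ω' (atom_eq k j (le_trans hkm hj) ω ω' e)]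
      exact hω j hj
    · intro hω j hj
      rw [ce_congr j f ω ω' (atom_eq k j (le_trans hkm hj) ω ω' e)]
      exact hω j hj
  have hQmeas : ∀ k, MeasurableSet (Q k) := by
    intro k
    have e : Q k = ⋂ j, ⋂ _ : k ≤ j, {ω | ce μ atom j f ω ≤ lam} := by
      rw [hQ]; ext ω; simp
    rw [e]
    exact MeasurableSet.iInter fun j => MeasurableSet.iInter fun _ =>
      measurableSet_le (ce_meas j f) measurable_const
  set S : ℕ → Set Ω := fun k => Q (k + 1) \ Q k with hSdef
  have hSmeas : ∀ k, MeasurableSet (S k) := fun k => (hQmeas (k + 1)).diff (hQmeas k)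
  have hSatom : ∀ k ω ω', atom k ω = atom k ω' → (ω ∈ S k ↔ ω' ∈ S k) := by
    intro k ω ω' e
    simp only [hSdef, Set.mem_diff]
    rw [hQatom k (k + 1) (Nat.le_succ k) ω ω' e, hQatom k k le_rfl ω ω' e]
  have hSdisj : Pairwise (Function.onFun Disjoint S) := by
    have key : ∀ k m, k < m → Disjoint (S k) (S m) := by
      intro k m hlt
      simp only [hSdef]
      rw [Set.disjoint_left]
      intro ω hω hω'
      exact hω'.2 (hQmono (by omega : k + 1 ≤ m) hω.1)
    intro k m hkm
    rcases lt_or_gt_of_ne hkm with hlt | hlt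
    · exact key k m hlt
    · exact (key m k hlt).symm
  -- the functions φ, g, G
  set φ : ℕ → Ω → ℝ := fun k => (S k).indicator f with hφdef
  have hφint : ∀ k, Integrable (φ k) μ := fun k => hf.indicator (hSmeas k)
  have hφ0 : ∀ k x, 0 ≤ φ k x := fun k x => Set.indicator_nonneg (fun y _ => hf0 y) x
  set g : ℕ → Ω → ℝ := fun k => (S k).indicator (ce μ atom k f) with hgdef
  have hgce : ∀ k ω, g k ω = ce μ atom k (φ k) ω := by
    intro k ω
    by_cases hω : ω ∈ S k
    · simp only [hgdef]
      rw [Set.indicator_of_mem hω]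
      simp only [ce, hφdef]
      congr 1
      refine setIntegral_congr_fun (hmeas k ω) ?_
      intro x hx
      have hxS : x ∈ S k := (hSatom k x ω ((AP k).eq_of_mem hx)).mpr hω
      exact (Set.indicator_of_mem hxS f).symm
    · simp only [hgdef]
      rw [Set.indicator_of_notMem hω]
      simp only [ce, hφdef]
      have hz : ∫ x in atom k ω, (S k).indicator f x ∂μ = 0 := by
        rw [setIntegral_congr_fun (hmeas k ω) (g := fun _ => (0 : ℝ))]
        · exact integral_zero _ _
        · intro x hx
          have hxS : x ∉ S k := fun hc => hω ((hSatom k x ω ((AP k).eq_of_mem hx)).mp hc)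
          exact Set.indicator_of_notMem hxS f
      rw [hz, mul_zero]
  have hg0 : ∀ k ω, 0 ≤ g k ω := by
    intro k ω
    refine Set.indicator_nonneg (fun y _ => ?_) ω
    exact mul_nonneg (inv_nonneg.mpr ENNReal.toReal_nonneg) (integral_nonneg fun x => hf0 x)
  have gfacts : ∀ k, Integrable (g k) μ ∧ ∫ ω, g k ω ∂μ = ∫ x, φ k x ∂μ := by
    intro k
    have hgF : g k = fun ω => (μ (atom k ω)).toReal⁻¹ * ∫ x in atom k ω, φ k x ∂μ :=
      funext fun ω => hgce k ω
    have := (AP k).integrable_avg (hφint k) (hφ0 k)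
    rw [hgF]
    exact this
  have gint : ∀ k, Integrable (g k) μ := fun k => (gfacts k).1
  have Gfacts : ∀ k, Integrable (fun ω => ce μ atom (k + 1) (g k) ω) μ ∧
      ∫ ω, ce μ atom (k + 1) (g k) ω ∂μ = ∫ x, g k x ∂μ := fun k =>
    (AP (k + 1)).integrable_avg (gint k) (hg0 k)
  have hG0 : ∀ k ω, 0 ≤ ce μ atom (k + 1) (g k) ω := fun k ω =>
    mul_nonneg (inv_nonneg.mpr ENNReal.toReal_nonneg) (integral_nonneg fun x => hg0 k x)
  have hhk : ∀ k ω, h k ω = g k ω - ce μ atom (k + 1) (g k) ω := by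
    intro k ω
    rw [hh]
  -- Part 1
  have part1 : ∀ k ω, ce μ atom (k + 1) (h k) ω = 0 := by
    intro k ω
    have hA : MeasurableSet (atom (k + 1) ω) := hmeas (k + 1) ω
    have hint_g : IntegrableOn (g k) (atom (k + 1) ω) μ := (gint k).integrableOn
    have hint_G : IntegrableOn (fun x => ce μ atom (k + 1) (g k) x) (atom (k + 1) ω) μ :=
      (Gfacts k).1.integrableOn
    have hGconst : ∀ x ∈ atom (k + 1) ω,
        ce μ atom (k + 1) (g k) x = ce μ atom (k + 1) (g k) ω := by
      intro x hx
      exact ce_congr (k + 1) (g k) x ω ((AP (k + 1)).eq_of_mem hx)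
    have h2 : ∫ x in atom (k + 1) ω, ce μ atom (k + 1) (g k) x ∂μ
        = (μ (atom (k + 1) ω)).toReal * ce μ atom (k + 1) (g k) ω := by
      rw [setIntegral_congr_fun hA (g := fun _ => ce μ atom (k + 1) (g k) ω) hGconst,
        setIntegral_const, smul_eq_mul, measureReal_def]
    have hμA : (μ (atom (k + 1) ω)).toReal ≠ 0 :=
      ENNReal.toReal_ne_zero.mpr ⟨hpos (k + 1) ω, hfin (k + 1) ω⟩
    have h3 : ∫ x in atom (k + 1) ω, g k x ∂μ
        = (μ (atom (k + 1) ω)).toReal * ce μ atom (k + 1) (g k) ω := by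
      rw [show ce μ atom (k + 1) (g k) ω
          = (μ (atom (k + 1) ω)).toReal⁻¹ * ∫ x in atom (k + 1) ω, g k x ∂μ from rfl]
      rw [← mul_assoc, mul_inv_cancel₀ hμA, one_mul]
    have h4 : ∫ x in atom (k + 1) ω, h k x ∂μ = 0 := by
      have e : ∀ x, h k x = g k x - ce μ atom (k + 1) (g k) x := fun x => hhk k x
      simp only [e]
      rw [integral_sub hint_g hint_G, h2, h3, sub_self]
    show (μ (atom (k + 1) ω)).toReal⁻¹ * ∫ x in atom (k + 1) ω, h k x ∂μ = 0
    rw [h4, mul_zero]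
  -- Part 2
  have part2 : ∀ k (ω ω' : Ω), atom k ω = atom k ω' → h k ω = h k ω' := by
    intro k ω ω' e
    rw [hhk k ω, hhk k ω']
    have e1 : g k ω = g k ω' := by
      simp only [hgdef]
      by_cases hω : ω ∈ S k
      · rw [Set.indicator_of_mem hω, Set.indicator_of_mem ((hSatom k ω ω' e).mp hω),
          ce_congr k f ω ω' e]
      · rw [Set.indicator_of_notMem hω,
          Set.indicator_of_notMem (fun c => hω ((hSatom k ω ω' e).mpr c))]
    rw [e1, ce_congr (k + 1) (g k) ω ω' (atom_eq k (k + 1) (Nat.le_succ k) ω ω' e)]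
  -- Part 3
  refine ⟨part1, part2, ?_⟩
  have hint : ∀ k, Integrable (h k) μ := by
    intro k
    have e : h k = fun ω => g k ω - ce μ atom (k + 1) (g k) ω := funext fun ω => hhk k ω
    rw [e]
    exact (gint k).sub (Gfacts k).1
  have hbound : ∀ k, ∫ ω, |h k ω| ∂μ ≤ 2 * ∫ x in S k, f x ∂μ := by
    intro k
    have hptw : ∀ ω, |h k ω| ≤ g k ω + ce μ atom (k + 1) (g k) ω := by
      intro ω
      rw [hhk k ω]
      calc |g k ω - ce μ atom (k + 1) (g k) ω| ≤ |g k ω| + |ce μ atom (k + 1) (g k) ω| :=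
            abs_sub _ _
        _ = g k ω + ce μ atom (k + 1) (g k) ω := by
            rw [abs_of_nonneg (hg0 k ω), abs_of_nonneg (hG0 k ω)]
    have hφS : ∫ x, φ k x ∂μ = ∫ x in S k, f x ∂μ := by
      simp only [hφdef]
      exact integral_indicator (hSmeas k)
    calc ∫ ω, |h k ω| ∂μ ≤ ∫ ω, (g k ω + ce μ atom (k + 1) (g k) ω) ∂μ :=
          integral_mono (hint k).abs ((gint k).add (Gfacts k).1) hptw
      _ = ∫ ω, g k ω ∂μ + ∫ ω, ce μ atom (k + 1) (g k) ω ∂μ :=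
          integral_add (gint k) (Gfacts k).1
      _ = ∫ x, φ k x ∂μ + ∫ x, φ k x ∂μ := by rw [(gfacts k).2, (Gfacts k).2, (gfacts k).2]
      _ = 2 * ∫ x in S k, f x ∂μ := by rw [hφS]; ring
  have hsum : HasSum (fun k => ∫ x in S k, f x ∂μ) (∫ x in ⋃ k, S k, f x ∂μ) :=
    hasSum_integral_iUnion hSmeas hSdisj hf.integrableOn
  have hsum2 : Summable fun k => ∫ x in S k, f x ∂μ := hsum.summable
  have hSle : ∫ x in ⋃ k, S k, f x ∂μ ≤ ∫ x, f x ∂μ :=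
    setIntegral_le_integral hf (Filter.Eventually.of_forall fun x => hf0 x)
  have habs_nonneg : ∀ k, 0 ≤ ∫ ω, |h k ω| ∂μ := fun k => integral_nonneg fun ω => abs_nonneg _
  calc ∑' k : ℕ, ∫ ω, |h k ω| ∂μ ≤ ∑' k : ℕ, 2 * ∫ x in S k, f x ∂μ :=
        Summable.tsum_le_tsum hbound
          (Summable.of_nonneg_of_le habs_nonneg hbound (hsum2.mul_left 2)) (hsum2.mul_left 2)
    _ = 2 * ∑' k : ℕ, ∫ x in S k, f x ∂μ := tsum_mul_left
    _ = 2 * ∫ x in ⋃ k, S k, f x ∂μ := by rw [hsum.tsum_eq]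
    _ ≤ 2 * ∫ x, f x ∂μ := by linarith
end

section
/- (Geometric decomposition of L¹ functions) Under the hypotheses of the support localization lemma (for every compactly supported nonnegative f there exists x with ∫_{x⁻¹E} f ≥ c'‖f‖₁ for a fixed c' ∈ (0,1)), every compactly supported f ∈ L¹(G) can be written as f = Σ_{n≥0} f_n with each f_n supported in some left translate x_n⁻¹E and ‖f_n‖₁ ≤ (1−c')ⁿ‖f‖₁. -/
open MeasureTheory Set Filter
open scoped ENNReal Pointwise Topology

/-- Geometric decomposition of `L¹` functions: if every compactly supported
nonnegative integrable function `g` satisfies `∫_{x⁻¹E} g ≥ c'‖g‖₁` for some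
`x`, then every compactly supported `f ∈ L¹` decomposes as `f = Σ_n f_n` (in
`L¹`) with each `f_n` supported in some translate `x_n⁻¹E` and
`‖f_n‖₁ ≤ (1-c')ⁿ‖f‖₁`. -/
theorem stmt18 {G : Type*} [Group G] [TopologicalSpace G] [IsTopologicalGroup G]
    [LocallyCompactSpace G] [SecondCountableTopology G]
    [MeasurableSpace G] [BorelSpace G]
    (μ : Measure G) [μ.IsMulRightInvariant] [IsFiniteMeasureOnCompacts μ]
    (E : Set G) (hE : MeasurableSet E)
    (c' : ℝ) (hc0 : 0 < c') (hc1 : c' < 1)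
    (hloc : ∀ g : G → ℝ, Integrable g μ → (∀ x, 0 ≤ g x) →
      HasCompactSupport g →
      ∃ x : G, c' * ∫ z, g z ∂μ ≤ ∫ z in x⁻¹ • E, g z ∂μ)
    (f : G → ℝ) (hf : Integrable f μ) (hfc : HasCompactSupport f) :
    ∃ (x : ℕ → G) (fs : ℕ → G → ℝ),
      (∀ n, ∀ z ∉ (x n)⁻¹ • E, fs n z = 0) ∧
      (∀ n, ∫ z, |fs n z| ∂μ ≤ (1 - c') ^ n * ∫ z, |f z| ∂μ) ∧
      Tendsto (fun N => ∫ z, |f z - ∑ n ∈ Finset.range N, fs n z| ∂μ)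
        atTop (𝓝 0) := by
  classical
  -- selector for the translate
  have pickex : ∀ h : G → ℝ, ∃ x : G,
      (Integrable h μ ∧ (∀ y, 0 ≤ h y) ∧ HasCompactSupport h) →
      c' * ∫ z, h z ∂μ ≤ ∫ z in x⁻¹ • E, h z ∂μ := by
    intro h
    by_cases hh : Integrable h μ ∧ (∀ y, 0 ≤ h y) ∧ HasCompactSupport h
    · obtain ⟨x, hx⟩ := hloc h hh.1 hh.2.1 hh.2.2
      exact ⟨x, fun _ => hx⟩
    · exact ⟨1, fun h' => absurd h' hh⟩
  choose pick hpick using pickex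
  -- the iteration
  let g : ℕ → G → ℝ := fun n =>
    Nat.rec f (fun _ h => Set.indicator (((pick fun z => |h z|)⁻¹ • E))ᶜ h) n
  let x : ℕ → G := fun n => pick fun z => |g n z|
  let fs : ℕ → G → ℝ := fun n => Set.indicator ((x n)⁻¹ • E) (g n)
  have hgsucc : ∀ n, g (n + 1) = Set.indicator (((x n)⁻¹ • E))ᶜ (g n) := fun n => rfl
  have hS : ∀ n, MeasurableSet ((x n)⁻¹ • E) := fun n => hE.const_smul _
  -- integrability and compact support
  have key : ∀ n, Integrable (g n) μ ∧ HasCompactSupport (g n) := by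
    intro n
    induction n with
    | zero => exact ⟨hf, hfc⟩
    | succ n ih =>
      rw [hgsucc n]
      refine ⟨ih.1.indicator (hS n).compl, ih.2.mono ?_⟩
      rw [Set.support_indicator]; exact Set.inter_subset_right
  have habs : ∀ n, Integrable (fun z => |g n z|) μ ∧ (∀ y, 0 ≤ |g n y|) ∧
      HasCompactSupport fun z => |g n z| := fun n =>
    ⟨(key n).1.abs, fun y => abs_nonneg _, (key n).2.abs⟩
  -- the key decay estimate
  have bound : ∀ n, ∫ z, |g (n + 1) z| ∂μ ≤ (1 - c') * ∫ z, |g n z| ∂μ := by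
    intro n
    have hpick' := hpick (fun z => |g n z|) (habs n)
    have habseq : ∀ z, |g (n + 1) z| =
        Set.indicator (((x n)⁻¹ • E))ᶜ (fun z => |g n z|) z := by
      intro z
      rw [hgsucc n]
      by_cases hz : z ∈ (((x n)⁻¹ • E))ᶜ <;>
        simp [Set.indicator_of_mem, Set.indicator_of_notMem, hz, abs_of_nonneg]
    have hsplit := integral_add_compl (hS n) (habs n).1
    calc ∫ z, |g (n + 1) z| ∂μ
        = ∫ z in (((x n)⁻¹ • E))ᶜ, |g n z| ∂μ := by
          simp_rw [habseq]
          exact integral_indicator (hS n).compl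
      _ = (∫ z, |g n z| ∂μ) - ∫ z in (x n)⁻¹ • E, |g n z| ∂μ := by linarith
      _ ≤ (∫ z, |g n z| ∂μ) - c' * ∫ z, |g n z| ∂μ := by linarith
      _ = (1 - c') * ∫ z, |g n z| ∂μ := by ring
  have geom : ∀ n, ∫ z, |g n z| ∂μ ≤ (1 - c') ^ n * ∫ z, |f z| ∂μ := by
    intro n
    induction n with
    | zero => simp [g]
    | succ n ih =>
      calc ∫ z, |g (n + 1) z| ∂μ ≤ (1 - c') * ∫ z, |g n z| ∂μ := bound n
        _ ≤ (1 - c') * ((1 - c') ^ n * ∫ z, |f z| ∂μ) := by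
            apply mul_le_mul_of_nonneg_left ih; linarith
        _ = (1 - c') ^ (n + 1) * ∫ z, |f z| ∂μ := by ring
  refine ⟨x, fs, ?_, ?_, ?_⟩
  · intro n z hz
    exact Set.indicator_of_notMem hz _
  · intro n
    refine le_trans ?_ (geom n)
    have : ∀ z, |fs n z| = Set.indicator ((x n)⁻¹ • E) (fun z => |g n z|) z := by
      intro z
      by_cases hz : z ∈ (x n)⁻¹ • E <;>
        simp [fs, Set.indicator_of_mem, Set.indicator_of_notMem, hz]
    simp_rw [this]
    rw [integral_indicator (hS n)]
    exact setIntegral_le_integral (habs n).1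
      (Filter.Eventually.of_forall fun z => abs_nonneg _)
  · -- partial sums
    have hpartial : ∀ N z, f z - ∑ n ∈ Finset.range N, fs n z = g N z := by
      intro N
      induction N with
      | zero => simp [g]
      | succ N ih =>
        intro z
        rw [Finset.sum_range_succ]
        have : f z - (∑ n ∈ Finset.range N, fs n z + fs N z)
            = g N z - fs N z := by rw [← ih z]; ring
        rw [this, hgsucc N]
        by_cases hz : z ∈ (x N)⁻¹ • E <;>
          simp [fs, Set.indicator_of_mem, Set.indicator_of_notMem, hz]
    simp_rw [hpartial]
    have hlim : Tendsto (fun N : ℕ => (1 - c') ^ N * ∫ z, |f z| ∂μ) atTop (𝓝 0) := by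
      have := (tendsto_pow_atTop_nhds_zero_of_lt_one (by linarith : (0:ℝ) ≤ 1 - c')
        (by linarith)).mul_const (∫ z, |f z| ∂μ)
      simpa using this
    exact squeeze_zero (fun N => integral_nonneg fun z => abs_nonneg _)
      (fun N => geom N) hlim
end
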